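/- arXiv:1409.3973 — 14 statements merged into one kernel-verified Lean document; each statement's English description precedes it below -/
import Mathlib

section
/- Let R be a ring with identity and I an ideal of R. Then I is square stable (i.e., whenever aR + bR = R with a ∈ I, b ∈ R, there exists y ∈ R with a² + by a unit) if and only if for every a ∈ I and every r ∈ R there exists x ∈ R such that a² + (1 - ar)x is a unit of R. -/
def SquareStable {R : Type*} [Ring R] (I : TwoSidedIdeal R) : Prop :=
  ∀ a ∈ I, ∀ b : R, (∃ x y : R, a * x + b * y = 1) → ∃ y : R, IsUnit (a ^ 2 + b * y)

def SquareStableRangeOne (R : Type*) [Ring R] : Prop :=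
  ∀ a b : R, (∃ x y : R, a * x + b * y = 1) → ∃ y : R, IsUnit (a ^ 2 + b * y)

def ExchangeIdeal {R : Type*} [Ring R] (I : TwoSidedIdeal R) : Prop :=
  ∀ a ∈ I, ∃ e : R, IsIdempotentElem e ∧ (∃ x : R, e = a * x) ∧ (∃ y : R, 1 - e = (1 - a) * y)

def RegularIdeal {R : Type*} [Ring R] (I : TwoSidedIdeal R) : Prop :=
  ∀ a ∈ I, ∃ x : R, a = a * x * a

def IsRegularElem {R : Type*} [Ring R] (a : R) : Prop := ∃ x : R, a = a * x * a

def IsStronglyRegularElem {R : Type*} [Ring R] (a : R) : Prop :=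
  (∃ x : R, a = a ^ 2 * x) ∧ (∃ y : R, a = y * a ^ 2)


theorem stmt0 {R : Type*} [Ring R] (I : TwoSidedIdeal R) :
    SquareStable I ↔ ∀ a ∈ I, ∀ r : R, ∃ x : R, IsUnit (a ^ 2 + (1 - a * r) * x) := by
  constructor
  · intro h a ha r
    exact h a ha (1 - a * r) ⟨r, 1, by noncomm_ring⟩
  · rintro h a ha b ⟨x, y, hxy⟩
    obtain ⟨z, hz⟩ := h a ha x
    have hb : 1 - a * x = b * y := (eq_sub_of_add_eq' hxy).symm
    exact ⟨y * z, by rwa [hb, mul_assoc] at hz⟩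
end

section
/- The ring ℤ of integers has no nonzero square stable ideal. More precisely, if n ≥ 2 then the ideal nℤ of ℤ is not square stable. -/
/-!
For `m ≥ 2` put `b = m² + m + 1`, so that `m · (-(m + 1)) + b = 1`. Since `m² ≡ -(m + 1) mod b`,
every `m² + b y` is `≡ -(m + 1)`, whereas `±1` would need `b ∣ m` or `b ∣ m + 2`, impossible as
`0 < m < m + 2 < b`. Hence no ideal of `ℤ` containing some `m ≥ 2` is square stable, and every
nonzero ideal contains such an `m`, namely `2a²` for any nonzero `a` in it.
-/

lemma Int.not_isUnit_sq_add_mul {m : ℤ} (hm : 2 ≤ m) (y : ℤ) :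
    ¬ IsUnit (m ^ 2 + (m ^ 2 + m + 1) * y) := by
  intro hu
  have hdvd : m ^ 2 + m + 1 ∣ m + 1 + (m ^ 2 + (m ^ 2 + m + 1) * y) := ⟨y + 1, by ring⟩
  rcases Int.isUnit_iff.mp hu with h | h <;> rw [h] at hdvd <;>
    nlinarith [Int.le_of_dvd (by omega) hdvd]

lemma not_squareStable_of_two_le_mem {I : TwoSidedIdeal ℤ} {m : ℤ} (hm : 2 ≤ m) (hmI : m ∈ I) :
    ¬ SquareStable I := fun hS ↦
  let ⟨y, hy⟩ := hS m hmI (m ^ 2 + m + 1) ⟨-(m + 1), 1, by ring⟩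
  Int.not_isUnit_sq_add_mul hm y hy

lemma TwoSidedIdeal.exists_two_le_mem_of_ne_bot {I : TwoSidedIdeal ℤ} (hI : I ≠ ⊥) :
    ∃ m ∈ I, 2 ≤ m := by
  obtain ⟨a, haI, ha⟩ : ∃ a ∈ I, a ≠ 0 := by
    by_contra! h
    exact hI (eq_bot_iff.2 fun x hx ↦ (TwoSidedIdeal.mem_bot ℤ).2 (h x hx))
  refine ⟨2 * a * a, I.mul_mem_left _ _ haI, ?_⟩
  nlinarith [Int.one_le_abs ha, sq_abs a]

theorem stmt1 : (∀ I : TwoSidedIdeal ℤ, SquareStable I → I = ⊥) ∧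
    (∀ n : ℤ, 2 ≤ n → ¬ SquareStable (TwoSidedIdeal.span {n})) := by
  refine ⟨fun I hS ↦ ?_, fun n hn ↦ not_squareStable_of_two_le_mem hn (TwoSidedIdeal.subset_span rfl)⟩
  by_contra hI
  obtain ⟨m, hmI, hm⟩ := TwoSidedIdeal.exists_two_le_mem_of_ne_bot hI
  exact not_squareStable_of_two_le_mem hm hmI hS
end

section
/- The formal power series ring ℤ[[x]] does not have square stable range one. -/
theorem SquareStableRangeOne.of_leftInverse {R S : Type*} [Ring R] [Ring S] (f : S →+* R)
    (g : R →+* S) (hgf : Function.LeftInverse g f) (h : SquareStableRangeOne R) :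
    SquareStableRangeOne S := by
  intro a b ⟨x, y, hxy⟩
  obtain ⟨z, hz⟩ := h (f a) (f b)
    ⟨f x, f y, by rw [← map_mul, ← map_mul, ← map_add, hxy, map_one]⟩
  refine ⟨g z, ?_⟩
  simpa only [map_add, map_pow, map_mul, hgf a, hgf b] using hz.map g

theorem Int.not_squareStableRangeOne : ¬ SquareStableRangeOne ℤ := by
  intro h
  obtain ⟨y, hy⟩ := h 2 7 ⟨4, -1, by norm_num⟩
  rw [Int.isUnit_iff] at hy
  omega

theorem stmt4 : ¬ SquareStableRangeOne (PowerSeries ℤ) := fun h =>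
  Int.not_squareStableRangeOne <|
    h.of_leftInverse PowerSeries.C PowerSeries.constantCoeff PowerSeries.constantCoeff_C
end

section
/- Let I be a square stable ideal of a ring R and a ∈ I. If a² ∈ J(R), then a ∈ J(R). -/
/-!
Take `b = 1 - a * r`. Since `a * r + b * 1 = 1`, square stability gives `y` with
`u = a ^ 2 + b * y` a unit; as `a ^ 2 ∈ J(R)`, also `b * y = u - a ^ 2` is a unit, so every
`1 - a * r` is right invertible. This forces every `1 - a * r`, hence every `1 - r * a`, to be a
unit, i.e. `a ∈ J(R)`.
-/

section

variable {R : Type*} [Ring R]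

/-- Jacobson's lemma, read off the spectrum over `ℤ` at `1`. -/
lemma isUnit_one_sub_mul_comm (x y : R) : IsUnit (1 - x * y) ↔ IsUnit (1 - y * x) := by
  simpa [spectrum.mem_iff] using
    (spectrum.unit_mem_mul_comm (R := ℤ) (a := x) (b := y) (r := 1)).not

namespace TwoSidedIdeal

lemma isUnit_add_one_of_mem_jacobson_bot {x : R} (hx : x ∈ (⊥ : TwoSidedIdeal R).jacobson) :
    IsUnit (x + 1) := by
  have left_inv (y : R) : ∃ z, z * (y * x + 1) = 1 := by
    obtain ⟨z, hz⟩ := mem_jacobson_iff.mp hx y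
    rw [mem_bot, sub_eq_zero] at hz
    exact ⟨z, by rw [mul_add, mul_one, ← mul_assoc, hz]⟩
  obtain ⟨z, hz⟩ := left_inv 1
  rw [one_mul] at hz
  -- `z = 1 - z * x` is itself of the form `y * x + 1`, so it has a left inverse too.
  obtain ⟨w, hw⟩ := left_inv (-z)
  have hz' : -z * x + 1 = z := by rw [← hz]; noncomm_ring
  rw [hz'] at hw
  have hw_eq : w = x + 1 := left_inv_eq_right_inv hw hz
  exact ⟨⟨x + 1, z, hw_eq ▸ hw, hz⟩, rfl⟩

lemma isUnit_add_of_mem_jacobson_bot {u j : R} (hu : IsUnit u)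
    (hj : j ∈ (⊥ : TwoSidedIdeal R).jacobson) : IsUnit (u + j) := by
  obtain ⟨v, rfl⟩ := hu
  have h : IsUnit (j * ↑v⁻¹ + 1) := isUnit_add_one_of_mem_jacobson_bot (mul_mem_right _ _ _ hj)
  convert h.mul v.isUnit using 1
  simp [add_mul, add_comm]

lemma mem_jacobson_bot_of_forall_isUnit {x : R} (h : ∀ y, IsUnit (y * x + 1)) :
    x ∈ (⊥ : TwoSidedIdeal R).jacobson := by
  refine mem_jacobson_iff.mpr fun y ↦ ?_
  obtain ⟨v, hv⟩ := h y
  refine ⟨↑v⁻¹, (mem_bot R).mpr ?_⟩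
  rw [mul_assoc, ← mul_add_one, ← hv, Units.inv_mul, sub_self]

end TwoSidedIdeal

lemma isUnit_one_sub_mul_of_forall_exists_mul_eq_one {a : R}
    (h : ∀ r, ∃ t, (1 - a * r) * t = 1) (r : R) : IsUnit (1 - a * r) := by
  obtain ⟨t, ht⟩ := h r
  -- The right inverse `t = 1 + a * r * t` is again of the form `1 - a * r'`.
  obtain ⟨s, hs⟩ := h (-(r * t))
  have ht' : 1 - a * -(r * t) = t := by rw [← sub_eq_zero, ← ht]; noncomm_ring
  rw [ht'] at hs
  have hs_eq : 1 - a * r = s := left_inv_eq_right_inv ht hs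
  exact ⟨⟨1 - a * r, t, ht, hs_eq ▸ hs⟩, rfl⟩

lemma mem_jacobson_bot_of_forall_exists_mul_eq_one {a : R}
    (h : ∀ r, ∃ t, (1 - a * r) * t = 1) : a ∈ (⊥ : TwoSidedIdeal R).jacobson := by
  refine TwoSidedIdeal.mem_jacobson_bot_of_forall_isUnit fun y ↦ ?_
  have hu : IsUnit (1 - -y * a) :=
    (isUnit_one_sub_mul_comm a (-y)).mp (isUnit_one_sub_mul_of_forall_exists_mul_eq_one h (-y))
  rwa [neg_mul, sub_neg_eq_add, add_comm] at hu

lemma SquareStable.exists_mul_eq_one_of_sq_mem_jacobson {I : TwoSidedIdeal R}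
    (hI : SquareStable I) {a : R} (ha : a ∈ I) (h : a ^ 2 ∈ (⊥ : TwoSidedIdeal R).jacobson)
    (r : R) : ∃ t, (1 - a * r) * t = 1 := by
  obtain ⟨y, hu⟩ := hI a ha (1 - a * r) ⟨r, 1, by noncomm_ring⟩
  obtain ⟨v, hv⟩ : IsUnit ((1 - a * r) * y) := by
    simpa using TwoSidedIdeal.isUnit_add_of_mem_jacobson_bot hu (neg_mem h)
  exact ⟨y * ↑v⁻¹, by rw [← mul_assoc, ← hv, Units.mul_inv]⟩

end

theorem stmt6 {R : Type*} [Ring R] (I : TwoSidedIdeal R) (hI : SquareStable I)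
    (a : R) (ha : a ∈ I) (h : a ^ 2 ∈ (⊥ : TwoSidedIdeal R).jacobson) :
    a ∈ (⊥ : TwoSidedIdeal R).jacobson :=
  mem_jacobson_bot_of_forall_exists_mul_eq_one (hI.exists_mul_eq_one_of_sq_mem_jacobson ha h)
end

section
/- Let R be a ring and suppose ax + b = 1 with a, x, b ∈ R. If a is unit-regular (i.e., a = aua for some unit u), then there exists y ∈ R such that a + by is a unit of R. -/
/-! Take `y = u⁻¹ (1 - e)` with `e = u a`, an idempotent since `a u a = a`. Substituting
`b = 1 - a x` gives `u (a + b y) = 1 - e (x u⁻¹) (1 - e)`, and a corner element `e z (1 - e)`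
squares to zero, so `1 - e z (1 - e)` is a unit. -/

theorem IsIdempotentElem.isUnit_one_sub_mul_mul_one_sub {R : Type*} [Ring R] {e : R}
    (he : IsIdempotentElem e) (z : R) : IsUnit (1 - e * z * (1 - e)) := by
  refine IsNilpotent.isUnit_one_sub ⟨2, ?_⟩
  calc (e * z * (1 - e)) ^ 2 = e * z * ((1 - e) * e) * z * (1 - e) := by noncomm_ring
    _ = 0 := by rw [he.one_sub_mul_self, mul_zero, zero_mul, zero_mul]

theorem isIdempotentElem_units_mul_of_eq_mul_mul {R : Type*} [Ring R] {a : R} {u : Rˣ}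
    (hu : a = a * u * a) : IsIdempotentElem (u * a : R) := by
  rw [IsIdempotentElem, mul_assoc, ← mul_assoc a, ← hu]

theorem add_mul_units_inv_mul_one_sub_eq {R : Type*} [Ring R] (a x b : R) (u : Rˣ)
    (h : a * x + b = 1) :
    a + b * (↑u⁻¹ * (1 - u * a)) = ↑u⁻¹ * (1 - u * a * (x * ↑u⁻¹) * (1 - u * a)) := by
  rw [eq_sub_of_add_eq' h]
  simp only [mul_sub, sub_mul, mul_one, one_mul, mul_assoc, Units.inv_mul_cancel_left]
  abel

theorem stmt7 {R : Type*} [Ring R] (a x b : R) (h : a * x + b = 1)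
    (hu : ∃ u : Rˣ, a = a * u * a) : ∃ y : R, IsUnit (a + b * y) := by
  obtain ⟨u, hu⟩ := hu
  refine ⟨↑u⁻¹ * (1 - u * a), ?_⟩
  rw [add_mul_units_inv_mul_one_sub_eq a x b u h]
  exact u⁻¹.isUnit.mul
    ((isIdempotentElem_units_mul_of_eq_mul_mul hu).isUnit_one_sub_mul_mul_one_sub _)
end

section
/- Let I be an exchange ideal of a ring R. Then I is square stable if and only if for every a ∈ I and every idempotent e ∈ R, ae - ea ∈ J(R). -/
open TwoSidedIdeal

theorem isUnit_of_isUnit_mul_of_isUnit_mul {M : Type*} [Monoid M] {u v : M}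
    (huv : IsUnit (u * v)) (hvu : IsUnit (v * u)) : IsUnit u := by
  obtain ⟨p, hp⟩ := huv.exists_right_inv
  obtain ⟨q, hq⟩ := hvu.exists_left_inv
  exact isUnit_iff_exists_and_exists.2
    ⟨⟨v * p, by rw [← mul_assoc, hp]⟩, ⟨q * v, by rw [mul_assoc, hq]⟩⟩

theorem isUnit_of_mul_eq_one_of_commute {M : Type*} [Monoid M] {w v : M} (h : w * v = 1)
    (hc : Commute (v * w) w) : IsUnit w := by
  have hvw : v * w = 1 :=
    calc v * w = v * w * w * v := by rw [mul_assoc _ w v, h, mul_one]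
      _ = 1 := by rw [hc.eq, ← mul_assoc, h, one_mul, h]
  exact isUnit_iff_exists.2 ⟨v, h, hvw⟩

section Ring

variable {R : Type*} [Ring R]

namespace IsIdempotentElem

variable {e : R}

theorem eq_of_eq_mul {g p q : R} (he : IsIdempotentElem e) (hp : g = e * p)
    (hq : 1 - g = (1 - e) * q) : g = e :=
  calc g = e * g := by rw [hp, ← mul_assoc, he.eq]
    _ = e - e * (1 - g) := by noncomm_ring
    _ = e := by rw [hq, ← mul_assoc, he.mul_one_sub_self, zero_mul, sub_zero]

theorem one_sub_mul_mul_mul_self_eq_zero (he : IsIdempotentElem e) (a : R) :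
    (1 - e) * a * e * ((1 - e) * a * e) = 0 :=
  calc (1 - e) * a * e * ((1 - e) * a * e) = (1 - e) * a * (e * (1 - e)) * a * e := by
        noncomm_ring
    _ = 0 := by rw [he.mul_one_sub_self]; noncomm_ring

theorem mul_add_one_sub_mul_eq_one {a c : R} (he : IsIdempotentElem e) (hae : Commute a e)
    (hc : e = a * c) : (e * a + (1 - e)) * (e * c * e + (1 - e)) = 1 := by
  have hea : e * a * e = e * a := by rw [mul_assoc, hae.eq, ← mul_assoc, he.eq]
  calc (e * a + (1 - e)) * (e * c * e + (1 - e))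
      = e * a * e * c * e + (e * a - e * a * e) + (1 - e) * e * c * e + (1 - e) * (1 - e) := by
        noncomm_ring
    _ = e * (a * c) * e + (1 - e) * e * c * e + (1 - e) * (1 - e) := by rw [hea]; noncomm_ring
    _ = 1 := by rw [← hc, he.one_sub_mul_self, he.one_sub.eq, he.eq, he.eq]; noncomm_ring

theorem mul_mul_add_one_sub_eq_one_sub (he : IsIdempotentElem e) (a c : R) :
    (e * c * e + (1 - e)) * (e * a + (1 - e)) = 1 - (e - e * c * e * a) :=
  calc (e * c * e + (1 - e)) * (e * a + (1 - e))
      = e * c * (e * e) * a + e * c * (e * (1 - e)) + (1 - e) * e * a + (1 - e) * (1 - e) := by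
        noncomm_ring
    _ = 1 - (e - e * c * e * a) := by
        rw [he.eq, he.mul_one_sub_self, he.one_sub_mul_self, he.one_sub.eq]; noncomm_ring

theorem mul_add_one_sub_sq {a : R} (he : IsIdempotentElem e) (hae : Commute a e) :
    (e * a + (1 - e)) ^ 2 = e * a ^ 2 + (1 - e) := by
  have hea : e * a * e = e * a := by rw [mul_assoc, hae.eq, ← mul_assoc, he.eq]
  calc (e * a + (1 - e)) ^ 2
      = e * a * e * a + (e * a - e * a * e) + (1 - e) * e * a + (1 - e) * (1 - e) := by
        noncomm_ring
    _ = e * a ^ 2 + (1 - e) := by rw [hea, he.one_sub_mul_self, he.one_sub.eq]; noncomm_ring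

end IsIdempotentElem

theorem isUnit_one_add_mul_comm {x y : R} (h : IsUnit (1 + x * y)) : IsUnit (1 + y * x) := by
  obtain ⟨u, hu⟩ := h
  refine isUnit_iff_exists.2 ⟨1 - y * ↑u⁻¹ * x, ?_, ?_⟩
  · calc (1 + y * x) * (1 - y * ↑u⁻¹ * x)
          = 1 + y * x - y * ((1 + x * y) * ↑u⁻¹) * x := by noncomm_ring
      _ = 1 := by rw [← hu, u.mul_inv]; noncomm_ring
  · calc (1 - y * ↑u⁻¹ * x) * (1 + y * x)
          = 1 + y * x - y * (↑u⁻¹ * (1 + x * y)) * x := by noncomm_ring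
      _ = 1 := by rw [← hu, u.inv_mul]; noncomm_ring

theorem isUnit_one_add_mul_of_forall_exists_right_inv {x : R}
    (h : ∀ y, ∃ z, (1 + x * y) * z = 1) (y : R) : IsUnit (1 + x * y) := by
  obtain ⟨z, hz⟩ := h y
  -- the right inverse `z` is again of the form `1 + x y'`, so it has a right inverse too
  have hz' : z = 1 + x * -(y * z) :=
    calc z = (1 + x * y) * z - x * (y * z) := by noncomm_ring
      _ = 1 + x * -(y * z) := by rw [hz]; noncomm_ring
  obtain ⟨w, hw⟩ := h (-(y * z))
  rw [← hz'] at hw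
  have hw' : 1 + x * y = w := by
    calc 1 + x * y = (1 + x * y) * (z * w) := by rw [hw, mul_one]
      _ = w := by rw [← mul_assoc, hz, one_mul]
  exact isUnit_iff_exists.2 ⟨z, hz, hw' ▸ hw⟩

theorem isUnit_one_add_mul_of_forall_exists_left_inv {x : R}
    (h : ∀ y, ∃ z, z * (1 + y * x) = 1) (y : R) : IsUnit (1 + y * x) := by
  obtain ⟨z, hz⟩ := h y
  have hz' : z = 1 + -(z * y) * x :=
    calc z = z * (1 + y * x) - z * y * x := by noncomm_ring
      _ = 1 + -(z * y) * x := by rw [hz]; noncomm_ring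
  obtain ⟨w, hw⟩ := h (-(z * y))
  rw [← hz'] at hw
  have hw' : 1 + y * x = w := by
    calc 1 + y * x = w * z * (1 + y * x) := by rw [hw, one_mul]
      _ = w := by rw [mul_assoc, hz, mul_one]
  exact isUnit_iff_exists.2 ⟨z, hw' ▸ hw, hz⟩

namespace TwoSidedIdeal

theorem mem_jacobson_bot_iff_forall_isUnit_one_add_mul {x : R} :
    x ∈ (⊥ : TwoSidedIdeal R).jacobson ↔ ∀ y, IsUnit (1 + y * x) := by
  have hbot (y z : R) : z * y * x + z - 1 ∈ (⊥ : TwoSidedIdeal R) ↔ z * (1 + y * x) = 1 := by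
    rw [mem_bot, sub_eq_zero, mul_add, mul_one, ← mul_assoc, add_comm]
  simp only [mem_jacobson_iff, hbot]
  exact ⟨isUnit_one_add_mul_of_forall_exists_left_inv, fun h y => (h y).exists_left_inv⟩

theorem mem_jacobson_bot_of_forall_isUnit_one_add_mul {x : R}
    (h : ∀ y, IsUnit (1 + x * y)) : x ∈ (⊥ : TwoSidedIdeal R).jacobson :=
  mem_jacobson_bot_iff_forall_isUnit_one_add_mul.2 fun y => isUnit_one_add_mul_comm (h y)

theorem isUnit_of_sub_one_mem_jacobson_bot {u : R}
    (h : u - 1 ∈ (⊥ : TwoSidedIdeal R).jacobson) : IsUnit u := by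
  simpa using mem_jacobson_bot_iff_forall_isUnit_one_add_mul.1 h 1

theorem isUnit_of_isUnit_mk_jacobson_bot {u : R}
    (h : IsUnit (Ideal.Quotient.mk (asIdeal (⊥ : TwoSidedIdeal R).jacobson) u)) : IsUnit u := by
  obtain ⟨v', huv, hvu⟩ := isUnit_iff_exists.1 h
  obtain ⟨v, rfl⟩ := Ideal.Quotient.mk_surjective v'
  refine isUnit_of_isUnit_mul_of_isUnit_mul (v := v) (isUnit_of_sub_one_mem_jacobson_bot ?_)
    (isUnit_of_sub_one_mem_jacobson_bot ?_)
  · rwa [← mem_asIdeal, ← Ideal.Quotient.eq, map_mul, map_one]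
  · rwa [← mem_asIdeal, ← Ideal.Quotient.eq, map_mul, map_one]

end TwoSidedIdeal

theorem Ideal.Quotient.commute_mk_iff {K : Ideal R} [K.IsTwoSided] {a b : R} :
    Commute (Ideal.Quotient.mk K a) (Ideal.Quotient.mk K b) ↔ a * b - b * a ∈ K := by
  rw [Commute, SemiconjBy, ← map_mul, ← map_mul, Ideal.Quotient.eq]

theorem ExchangeIdeal.exists_isIdempotentElem_mk_eq {I : TwoSidedIdeal R} (hI : ExchangeIdeal I)
    (K : Ideal R) [K.IsTwoSided] {h : R} (hh : h ∈ I)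
    (hid : IsIdempotentElem (Ideal.Quotient.mk K h)) :
    ∃ g, IsIdempotentElem g ∧ Ideal.Quotient.mk K g = Ideal.Quotient.mk K h := by
  obtain ⟨g, hg, ⟨p, rfl⟩, q, hq⟩ := hI h hh
  refine ⟨h * p, hg, hid.eq_of_eq_mul (q := Ideal.Quotient.mk K q) (map_mul _ _ _) ?_⟩
  simpa only [map_sub, map_one, map_mul] using congrArg (Ideal.Quotient.mk K) hq

theorem SquareStable.mem_jacobson_bot_of_mul_self_eq_zero {I : TwoSidedIdeal R}
    (hs : SquareStable I) {x : R} (hx : x ∈ I) (hxx : x * x = 0) :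
    x ∈ (⊥ : TwoSidedIdeal R).jacobson := by
  refine mem_jacobson_bot_of_forall_isUnit_one_add_mul
    (isUnit_one_add_mul_of_forall_exists_right_inv fun y => ?_)
  obtain ⟨w, hw⟩ := hs x hx (1 + x * y) ⟨-y, 1, by noncomm_ring⟩
  rw [sq, hxx, zero_add] at hw
  obtain ⟨z, hz⟩ := hw.exists_right_inv
  exact ⟨w * z, by rw [← mul_assoc, hz]⟩

theorem SquareStable.mul_sub_mul_mem_jacobson_bot {I : TwoSidedIdeal R} (hs : SquareStable I)
    {a e : R} (ha : a ∈ I) (he : IsIdempotentElem e) :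
    a * e - e * a ∈ (⊥ : TwoSidedIdeal R).jacobson := by
  have corner_mem (f : R) (hf : IsIdempotentElem f) :
      (1 - f) * a * f ∈ (⊥ : TwoSidedIdeal R).jacobson :=
    hs.mem_jacobson_bot_of_mul_self_eq_zero (I.mul_mem_right _ _ (I.mul_mem_left _ _ ha))
      (hf.one_sub_mul_mul_mul_self_eq_zero a)
  have hdecomp : a * e - e * a = (1 - e) * a * e - (1 - (1 - e)) * a * (1 - e) := by
    noncomm_ring
  rw [hdecomp]
  exact sub_mem (corner_mem e he) (corner_mem (1 - e) he.one_sub)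

namespace ExchangeIdeal

variable {I : TwoSidedIdeal R}

theorem commute_mk_jacobson_bot_of_isIdempotentElem (hI : ExchangeIdeal I)
    (hcomm : ∀ a ∈ I, ∀ e : R, IsIdempotentElem e →
      a * e - e * a ∈ (⊥ : TwoSidedIdeal R).jacobson)
    {x h : R} (hx : x ∈ I) (hh : h ∈ I)
    (hid : IsIdempotentElem (Ideal.Quotient.mk (asIdeal (⊥ : TwoSidedIdeal R).jacobson) h)) :
    Commute (Ideal.Quotient.mk (asIdeal (⊥ : TwoSidedIdeal R).jacobson) h)
      (Ideal.Quotient.mk (asIdeal (⊥ : TwoSidedIdeal R).jacobson) x) := by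
  obtain ⟨g, hg, hgh⟩ := hI.exists_isIdempotentElem_mk_eq _ hh hid
  rw [← hgh]
  exact (Ideal.Quotient.commute_mk_iff.2 (mem_asIdeal.2 (hcomm x hx g hg))).symm

theorem isUnit_mul_sq_add_one_sub (hI : ExchangeIdeal I)
    (hcomm : ∀ a ∈ I, ∀ e : R, IsIdempotentElem e →
      a * e - e * a ∈ (⊥ : TwoSidedIdeal R).jacobson)
    {a c e : R} (ha : a ∈ I) (he : IsIdempotentElem e) (hc : e = a * c) :
    IsUnit (e * a ^ 2 + (1 - e)) := by
  set π := Ideal.Quotient.mk (asIdeal (⊥ : TwoSidedIdeal R).jacobson)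
  have heI : e ∈ I := hc ▸ I.mul_mem_right _ _ ha
  have hπe : IsIdempotentElem (π e) := he.map π
  have hae : Commute (π a) (π e) :=
    Ideal.Quotient.commute_mk_iff.2 (mem_asIdeal.2 (hcomm a ha e he))
  set w := π e * π a + (1 - π e)
  set v := π e * π c * π e + (1 - π e)
  have hwv : w * v = 1 := hπe.mul_add_one_sub_mul_eq_one hae (by rw [hc, map_mul])
  set h := e - e * c * e * a
  have hvw : v * w = 1 - π h := by
    rw [hπe.mul_mul_add_one_sub_eq_one_sub]
    simp only [h, map_sub, map_mul]
  have hhI : h ∈ I := I.sub_mem heI (I.mul_mem_left _ _ ha)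
  have hid : IsIdempotentElem (π h) := by
    have hvw_idem : IsIdempotentElem (v * w) := by
      rw [IsIdempotentElem, mul_assoc, ← mul_assoc w, hwv, one_mul]
    simpa only [hvw, sub_sub_cancel] using hvw_idem.one_sub
  have hhe : Commute (π h) (π e) :=
    hI.commute_mk_jacobson_bot_of_isIdempotentElem hcomm heI hhI hid
  have hha : Commute (π h) (π a) :=
    hI.commute_mk_jacobson_bot_of_isIdempotentElem hcomm ha hhI hid
  have hhw : Commute (π h) w := (hhe.mul_right hha).add_right ((Commute.one_right _).sub_right hhe)
  have hw : IsUnit w :=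
    isUnit_of_mul_eq_one_of_commute hwv (hvw ▸ (Commute.one_left w).sub_left hhw)
  apply isUnit_of_isUnit_mk_jacobson_bot
  rw [map_add, map_mul, map_pow, map_sub, map_one, ← hπe.mul_add_one_sub_sq hae]
  exact hw.pow 2

theorem squareStable (hI : ExchangeIdeal I)
    (hcomm : ∀ a ∈ I, ∀ e : R, IsIdempotentElem e →
      a * e - e * a ∈ (⊥ : TwoSidedIdeal R).jacobson) :
    SquareStable I := by
  rintro a ha b ⟨x, y, hxy⟩
  obtain ⟨e, he, ⟨r, her⟩, s, hes⟩ := hI (a * x) (I.mul_mem_right _ _ ha)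
  refine ⟨y * (s * (1 - a ^ 2)), ?_⟩
  have hby : b * y = 1 - a * x := eq_sub_of_add_eq' hxy
  have hunit : a ^ 2 + b * (y * (s * (1 - a ^ 2))) = e * a ^ 2 + (1 - e) :=
    calc a ^ 2 + b * (y * (s * (1 - a ^ 2))) = a ^ 2 + (1 - a * x) * s * (1 - a ^ 2) := by
          rw [← hby]; noncomm_ring
      _ = e * a ^ 2 + (1 - e) := by rw [← hes]; noncomm_ring
  rw [hunit]
  exact hI.isUnit_mul_sq_add_one_sub hcomm ha he (by rw [her, mul_assoc])

end ExchangeIdeal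

end Ring

theorem stmt9 {R : Type*} [Ring R] (I : TwoSidedIdeal R) (hI : ExchangeIdeal I) :
    SquareStable I ↔
      ∀ a ∈ I, ∀ e : R, IsIdempotentElem e → a * e - e * a ∈ (⊥ : TwoSidedIdeal R).jacobson := by
  exact ⟨fun hs _ ha _ he => hs.mul_sub_mul_mem_jacobson_bot ha he, hI.squareStable⟩
end

section
/- Let I be an exchange ideal of a ring R. Then I is square stable if and only if for every regular element a ∈ I, the image of a in R/J(R) is strongly regular. -/
namespace TwoSidedIdeal

variable {R : Type*} [Ring R]

theorem isUnit_one_sub_of_mem_jacobson_bot {x : R} (hx : x ∈ (⊥ : TwoSidedIdeal R).jacobson) :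
    IsUnit (1 - x) := by
  have left_inv : ∀ y ∈ (⊥ : TwoSidedIdeal R).jacobson, ∃ z, z * (1 - y) = 1 := by
    intro y hy
    obtain ⟨z, hz⟩ := mem_jacobson_iff.mp hy (-1)
    refine ⟨z, ?_⟩
    rw [mem_bot] at hz
    rw [← sub_eq_zero, ← hz]
    noncomm_ring
  obtain ⟨z, hz⟩ := left_inv x hx
  obtain ⟨z', hz'⟩ := left_inv (-(z * x)) (neg_mem _ (mul_mem_left _ z x hx))
  have hz'z : z' * z = 1 := by
    rw [← hz', sub_neg_eq_add, ← hz]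
    noncomm_ring
  have hxz : (1 - x) * z = 1 := left_inv_eq_right_inv hz'z hz ▸ hz'z
  exact isUnit_iff_exists.mpr ⟨z, hxz, hz⟩

theorem isLocalHom_ringCon_mk' {J : TwoSidedIdeal R} (hJ : J ≤ (⊥ : TwoSidedIdeal R).jacobson) :
    IsLocalHom J.ringCon.mk' := by
  have isUnit_of_map_eq_one : ∀ r : R, J.ringCon.mk' r = 1 → IsUnit r := fun r hr => by
    have hr1 : 1 - r ∈ J := by
      rw [← rel_iff, ← RingCon.eq]
      simpa [RingCon.coe_mk'] using hr.symm
    simpa using isUnit_one_sub_of_mem_jacobson_bot (hJ hr1)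
  refine ⟨fun x hx => ?_⟩
  obtain ⟨v', hxv, hvx⟩ := isUnit_iff_exists.mp hx
  obtain ⟨v, rfl⟩ := J.ringCon.mk'_surjective v'
  obtain ⟨U, hU⟩ := isUnit_of_map_eq_one (x * v) (by rw [map_mul, hxv])
  obtain ⟨V, hV⟩ := isUnit_of_map_eq_one (v * x) (by rw [map_mul, hvx])
  have hright : x * (v * ↑U⁻¹) = 1 := by rw [← mul_assoc, ← hU, U.mul_inv]
  have hleft : (↑V⁻¹ * v) * x = 1 := by rw [mul_assoc, ← hV, V.inv_mul]
  exact isUnit_iff_exists.mpr ⟨_, hright, left_inv_eq_right_inv hleft hright ▸ hleft⟩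

end TwoSidedIdeal

section

variable {R S : Type*} [Ring R] [Ring S]

theorem exists_mul_add_mul_eq_one_of_map (f : R →+* S) [IsLocalHom f]
    (hf : Function.Surjective f) {a b : R}
    (h : ∃ x y : S, f a * x + f b * y = 1) : ∃ x y : R, a * x + b * y = 1 := by
  obtain ⟨x', y', hxy⟩ := h
  obtain ⟨x, rfl⟩ := hf x'
  obtain ⟨y, rfl⟩ := hf y'
  obtain ⟨U, hU⟩ := IsUnit.of_map f (a * x + b * y) (by simp [hxy])
  exact ⟨x * ↑U⁻¹, y * ↑U⁻¹, by rw [← mul_assoc, ← mul_assoc, ← add_mul, ← hU, U.mul_inv]⟩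

theorem IsStronglyRegularElem.map (f : R →+* S) {a : R} (ha : IsStronglyRegularElem a) :
    IsStronglyRegularElem (f a) := by
  obtain ⟨⟨x, hx⟩, ⟨y, hy⟩⟩ := ha
  exact ⟨⟨f x, by rw [← map_pow, ← map_mul, ← hx]⟩, ⟨f y, by rw [← map_pow, ← map_mul, ← hy]⟩⟩

theorem IsStronglyRegularElem.exists_commute_inner_inverse {w : R} (hw : IsStronglyRegularElem w) :
    ∃ c, w * c = c * w ∧ w * c * w = w ∧ c * w * c = c := by
  obtain ⟨⟨s, hs⟩, ⟨t, ht⟩⟩ := hw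
  have hwg : w * w * s = w := by rw [← sq, ← hs]
  have hts : t * w = w * s := by
    calc t * w = t * w ^ 2 * s := by rw [mul_assoc, ← hs]
      _ = w * s := by rw [← ht]
  have hgw : w * s * w = w := by
    calc w * s * w = t * w ^ 2 := by rw [← hts, mul_assoc, sq]
      _ = w := ht.symm
  have hwc : w * (w * s * s) = w * s := by
    rw [← mul_assoc, ← mul_assoc, hwg]
  have hcw : w * s * s * w = w * s := by
    calc w * s * s * w = t * w * s * w := by rw [hts]
      _ = t * (w * s * w) := by noncomm_ring
      _ = w * s := by rw [hgw, hts]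
  refine ⟨w * s * s, by rw [hwc, hcw], by rw [hwc, hgw], ?_⟩
  calc w * s * s * w * (w * s * s) = w * s * w * s * s := by rw [hcw]; noncomm_ring
    _ = w * s * s := by rw [hgw]

-- `c` is the group inverse of `w`, and the hypotheses on `e` say `e R = w R`.
theorem isUnit_add_one_sub_of_commute_inner_inverse {w c e p : R} (hcomm : w * c = c * w)
    (hwcw : w * c * w = w) (hcwc : c * w * c = c) (he : IsIdempotentElem e) (hew : e * w = w)
    (hwp : w * p = e) : IsUnit (w + 1 - e) := by
  have hwce : w * c * e = e := by rw [← hwp, ← mul_assoc, hwcw]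
  have hc : w * (c * c) = c := by rw [← mul_assoc, hcomm, hcwc]
  have hec : e * c = c := by rw [← hc, ← mul_assoc, hew]
  refine isUnit_iff_exists.mpr ⟨1 - c * w + c * e, ?_, ?_⟩
  · calc (w + 1 - e) * (1 - c * w + c * e)
        = w - w * c * w + w * c * e + 1 - c * w + c * e - e + e * c * w - e * c * e := by
          noncomm_ring
      _ = 1 := by rw [hwcw, hwce, hec]; noncomm_ring
  · calc (1 - c * w + c * e) * (w + 1 - e)
        = w + 1 - e - w * c * w - c * w + w * c * e + c * (e * w) + c * e - c * (e * e) := by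
          rw [← hcomm]; noncomm_ring
      _ = 1 := by rw [hwcw, hwce, hew, he.eq]; abel

theorem SquareStable.exists_unit_sq_mul_eq {I : TwoSidedIdeal R} (hI : SquareStable I) {a x : R}
    (ha : a ∈ I) (hx : a * x * a = a) : ∃ u : Rˣ, a ^ 2 * u = a * x := by
  obtain ⟨y, U, hU⟩ := hI a ha (1 - a * x) ⟨x, 1, by noncomm_ring⟩
  have hxU : a * x * U = a ^ 2 := by
    calc a * x * U = (a * x * a) * a + (a * x - (a * x * a) * x) * y := by rw [hU]; noncomm_ring
      _ = a ^ 2 := by rw [hx]; noncomm_ring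
  exact ⟨U⁻¹, by rw [← hxU, Units.mul_inv_cancel_right]⟩

theorem SquareStable.isStronglyRegularElem {I : TwoSidedIdeal R} (hI : SquareStable I) {a : R}
    (ha : a ∈ I) (hreg : IsRegularElem a) : IsStronglyRegularElem a := by
  obtain ⟨x, hx⟩ := hreg
  obtain ⟨u, hu⟩ := hI.exists_unit_sq_mul_eq ha hx.symm
  have haua : a * (a * (u * a)) = a := by rw [← mul_assoc, ← mul_assoc, ← sq, hu, ← hx]
  refine ⟨⟨u * a, by rw [sq, mul_assoc, haua]⟩, ?_⟩
  -- in the corner ring `f R f`, `d` has the right inverse `c`; square stability makes it two-sided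
  obtain ⟨f, hf⟩ : ∃ f, f = x * a := ⟨_, rfl⟩
  obtain ⟨c, hc⟩ : ∃ c, c = f * (u * a) * f := ⟨_, rfl⟩
  obtain ⟨d, hd⟩ : ∃ d, d = f * a := ⟨_, rfl⟩
  have hff : f * f = f := by
    calc f * f = x * (a * x * a) := by rw [hf]; noncomm_ring
      _ = f := by rw [← hx, hf]
  have haf : a * f = a := by rw [hf, ← mul_assoc, ← hx]
  have hcf : c * f = c := by rw [hc, mul_assoc, hff]
  have hfc : f * c = c := by rw [hc, ← mul_assoc, ← mul_assoc, hff]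
  have hdf : d * f = d := by rw [hd, mul_assoc, haf]
  have hdc : d * c = f := by
    calc d * c = f * (a * f) * (u * a) * f := by rw [hd, hc]; noncomm_ring
      _ = x * (a * (a * (u * a))) * f := by rw [haf, hf]; noncomm_ring
      _ = f := by rw [haua, ← hf, hff]
  have hcdc : c * d * c = c := by rw [mul_assoc, hdc, hcf]
  have hcI : c ∈ I := hc ▸ I.mul_mem_right _ _ (I.mul_mem_right _ _ (hf ▸ I.mul_mem_left _ _ ha))
  obtain ⟨v, hv⟩ := hI.exists_unit_sq_mul_eq hcI hcdc
  have hfv : f = c * v * c := by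
    calc f = d * (c * d * c) := by rw [hcdc, hdc]
      _ = d * c * (c * v * c) := by rw [← hv]; noncomm_ring
      _ = c * v * c := by rw [hdc, ← mul_assoc, ← mul_assoc, hfc]
  have hcd : c * d = f := by
    calc c * d = c * d * (c * v * c) := by rw [← hfv, mul_assoc, hdf]
      _ = f := by rw [← mul_assoc, ← mul_assoc, hcdc, hfv]
  refine ⟨a * (u * a) * x, ?_⟩
  calc a = a * (c * d) := by rw [hcd, haf]
    _ = a * f * (u * a) * (f * f) * a := by rw [hc, hd]; noncomm_ring
    _ = a * (u * a) * x * a ^ 2 := by rw [hff, haf, hf]; noncomm_ring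

theorem IsIdempotentElem.mul_mul_mul_eq_of_eq_mul {e a z : R} (he : IsIdempotentElem e)
    (h : e = a * z) : e * a * (z * e) = e := by
  rw [mul_assoc, ← mul_assoc a, ← h, he.eq, he.eq]

theorem IsIdempotentElem.isRegularElem_mul_of_eq_mul {e a z : R} (he : IsIdempotentElem e)
    (h : e = a * z) : IsRegularElem (e * a) :=
  ⟨z * e, by rw [he.mul_mul_mul_eq_of_eq_mul h, ← mul_assoc, he.eq]⟩

theorem exists_sq_mul_add_mul_eq_one {a b x y z z' t e : R} (hab : a * x + b * y = 1)
    (he : IsIdempotentElem e) (hea : e = a * z) (heb : 1 - e = b * z')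
    (ht : e * a = (e * a) ^ 2 * t) : ∃ X Y, a ^ 2 * X + b * Y = 1 := by
  have haze : a * z * e = e := by rw [← hea, he.eq]
  have hea2 : e * a ^ 2 = a ^ 2 - b * z' * a ^ 2 := by rw [← heb]; noncomm_ring
  have hexpand :
      a = a ^ 2 * (z * e * a * t) - b * (z' * a ^ 2 * (z * e * a * t)) + b * (z' * a) := by
    calc a = e * a + (1 - e) * a := by noncomm_ring
      _ = (e * a) ^ 2 * t + (1 - e) * a := by rw [← ht]
      _ = e * a * (a * z * e) * a * t + (1 - e) * a := by rw [haze]; noncomm_ring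
      _ = e * a ^ 2 * (z * e * a * t) + (1 - e) * a := by noncomm_ring
      _ = _ := by rw [hea2, heb]; noncomm_ring
  refine ⟨z * e * a * t * x, (z' * a - z' * a ^ 2 * (z * e * a * t)) * x + y, ?_⟩
  calc a ^ 2 * (z * e * a * t * x) + b * ((z' * a - z' * a ^ 2 * (z * e * a * t)) * x + y)
      = (a ^ 2 * (z * e * a * t) - b * (z' * a ^ 2 * (z * e * a * t)) + b * (z' * a)) * x
        + b * y := by noncomm_ring
    _ = 1 := by rw [← hexpand, hab]

theorem ExchangeIdeal.squareStable_of_isStronglyRegularElem_mk {I J : TwoSidedIdeal R}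
    (hI : ExchangeIdeal I) (hJ : J ≤ (⊥ : TwoSidedIdeal R).jacobson)
    (H : ∀ a ∈ I, IsRegularElem a → IsStronglyRegularElem (J.ringCon.mk' a)) :
    SquareStable I := by
  have := TwoSidedIdeal.isLocalHom_ringCon_mk' hJ
  set π := J.ringCon.mk'
  intro a ha b ⟨x, y, hxy⟩
  obtain ⟨X, Y, hXY⟩ : ∃ X Y, a ^ 2 * X + b * Y = 1 := by
    obtain ⟨e, he, ⟨r, her⟩, ⟨s, hes⟩⟩ := hI (a * x) (I.mul_mem_right _ _ ha)
    have hea : e = a * (x * r) := by rw [her, mul_assoc]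
    have heb : 1 - e = b * (y * s) := by rw [hes, ← hxy, ← mul_assoc]; noncomm_ring
    obtain ⟨⟨t, ht⟩, -⟩ := H (e * a) (I.mul_mem_left _ _ ha) (he.isRegularElem_mul_of_eq_mul hea)
    rw [map_mul] at ht
    refine exists_mul_add_mul_eq_one_of_map π J.ringCon.mk'_surjective ?_
    simpa only [map_pow] using exists_sq_mul_add_mul_eq_one (x := π x) (y := π y)
      (by rw [← map_mul, ← map_mul, ← map_add, hxy, map_one]) (he.map π)
      (by rw [hea, map_mul]) (by rw [← map_one π, ← map_sub, heb, map_mul]) ht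
  have ha2 : a ^ 2 ∈ I := by rw [sq]; exact I.mul_mem_left _ _ ha
  obtain ⟨e, he, ⟨r, her⟩, ⟨s, hes⟩⟩ := hI (a ^ 2 * X) (I.mul_mem_right _ _ ha2)
  have hea : e = a ^ 2 * (X * r) := by rw [her, mul_assoc]
  have hw := H (e * a ^ 2) (I.mul_mem_left _ _ ha2) (he.isRegularElem_mul_of_eq_mul hea)
  obtain ⟨c, hcomm, hwcw, hcwc⟩ := hw.exists_commute_inner_inverse
  have hu : IsUnit (π (e * a ^ 2 + 1 - e)) := by
    rw [map_sub, map_add, map_one]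
    exact isUnit_add_one_sub_of_commute_inner_inverse hcomm hwcw hcwc (he.map π)
      (by rw [← map_mul, ← mul_assoc, he.eq]) (by rw [← map_mul, he.mul_mul_mul_eq_of_eq_mul hea])
  have hbe : b * (Y * s) = 1 - e := by rw [hes, ← hXY, ← mul_assoc]; noncomm_ring
  refine ⟨Y * s * (1 - a ^ 2), ?_⟩
  have hsum : a ^ 2 + b * (Y * s * (1 - a ^ 2)) = e * a ^ 2 + 1 - e := by
    calc a ^ 2 + b * (Y * s * (1 - a ^ 2)) = a ^ 2 + b * (Y * s) * (1 - a ^ 2) := by noncomm_ring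
      _ = e * a ^ 2 + 1 - e := by rw [hbe]; noncomm_ring
  rw [hsum]
  exact IsUnit.of_map π _ hu

end

theorem stmt10 {R : Type*} [Ring R] (I : TwoSidedIdeal R) (hI : ExchangeIdeal I) :
    SquareStable I ↔
      ∀ a ∈ I, IsRegularElem a →
        IsStronglyRegularElem ((a : ((⊥ : TwoSidedIdeal R).jacobson).ringCon.Quotient)) :=
  ⟨fun hSS _ ha hreg => (hSS.isStronglyRegularElem ha hreg).map (RingCon.mk' _),
    hI.squareStable_of_isStronglyRegularElem_mk le_rfl⟩
end

section
/- Let I be an exchange ideal of a ring R. Then I is square stable if and only if every regular element of I is strongly regular. -/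
/-!
A regular `a = a x a` in a square stable ideal lies in `a²R`: square stability applied to
`a x + (1 - a x) = 1` gives a unit `u` with `a x u = a²`. Hence regular square-zero elements of `I`
vanish, which forces every one-sided inverse `u v = e` inside a corner `eRe` with `v ∈ I` to be
two-sided; applied to `u = a e` (with `e = a x`) this gives `a ∈ Ra²`.

Conversely, if `a x + b y = 1`, the exchange property yields an idempotent `e ∈ a x R` with
`1 - e ∈ bR`, so it suffices that `e a² + (1 - e)` be a unit. It factors as
`(e a + (1 - e)) (π a + (1 - π))` with `π` the group idempotent of the strongly regular
element `e a`, and both factors are units since `k + (1 - f)` is a unit whenever `k` is strongly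
regular and `f` is an idempotent with `f k = k` and `f ∈ kR`.
-/

section

variable {R : Type*} [Ring R]

theorem SquareStable.exists_eq_sq_mul {I : TwoSidedIdeal R} (hs : SquareStable I) {a : R}
    (ha : a ∈ I) (hreg : IsRegularElem a) : ∃ s, a = a ^ 2 * s := by
  obtain ⟨x, hx⟩ := hreg
  obtain ⟨y, hy⟩ := hs a ha (1 - a * x) ⟨x, 1, by noncomm_ring⟩
  obtain ⟨u, hu⟩ := hy
  have hax : a * x * a * x = a * x := by rw [← hx]
  have key : a * x * u = a ^ 2 :=
    calc a * x * u = a * x * a * a + (a * x - a * x * a * x) * y := by rw [hu]; noncomm_ring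
      _ = a ^ 2 := by rw [hax, sub_self, zero_mul, add_zero, ← hx, sq]
  refine ⟨↑u⁻¹ * a, ?_⟩
  calc a = a * x * (u * ↑u⁻¹) * a := by rw [Units.mul_inv, mul_one, ← hx]
    _ = a ^ 2 * (↑u⁻¹ * a) := by rw [← key]; noncomm_ring

theorem SquareStable.eq_zero_of_sq_eq_zero {I : TwoSidedIdeal R} (hs : SquareStable I) {a : R}
    (ha : a ∈ I) (hreg : IsRegularElem a) (h2 : a ^ 2 = 0) : a = 0 := by
  obtain ⟨s, hs⟩ := hs.exists_eq_sq_mul ha hreg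
  rw [hs, h2, zero_mul]

theorem corner_mul_eq_of_mul_eq {I : TwoSidedIdeal R}
    (hnil : ∀ m ∈ I, IsRegularElem m → m ^ 2 = 0 → m = 0) {u v e : R} (hv : v ∈ I)
    (huv : u * v = e) (hue : u * e = u) (hev : e * v = v) (hve : v * e = v) : v * u = e := by
  have hee : e * e = e := by nth_rw 1 [← huv]; rw [mul_assoc, hve, huv]
  set q := e - v * u with hq
  have hqe : q * e = q := by rw [hq, sub_mul, hee, mul_assoc, hue]
  have hqv : q * v = 0 := by rw [hq, sub_mul, hev, mul_assoc, huv, hve, sub_self]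
  have hqq : q * q = q :=
    calc q * q = q * e - q * v * u := by rw [hq, mul_sub, mul_assoc]
      _ = q := by rw [hqe, hqv, zero_mul, sub_zero]
  -- `v q` is a regular square-zero element of `I`, hence zero
  have hm : v * q = 0 := by
    refine hnil _ (I.mul_mem_right _ _ hv) ⟨q * u, ?_⟩
      (by rw [sq, mul_assoc, ← mul_assoc q, hqv, zero_mul, mul_zero])
    calc v * q = v * (q * q * (u * v) * q) := by rw [huv, hqq, hqe, hqq]
      _ = v * q * (q * u) * (v * q) := by noncomm_ring
  have hq0 : q = 0 :=
    calc q = q * (u * v) * q := by rw [huv, hqe, hqq]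
      _ = q * u * (v * q) := by noncomm_ring
      _ = 0 := by rw [hm, mul_zero]
  exact (sub_eq_zero.mp hq0).symm

theorem isStronglyRegularElem_of_squareStable {I : TwoSidedIdeal R} (hs : SquareStable I) {a : R}
    (ha : a ∈ I) (hreg : IsRegularElem a) : IsStronglyRegularElem a := by
  obtain ⟨s, has⟩ := hs.exists_eq_sq_mul ha hreg
  obtain ⟨x, hx⟩ := hreg
  refine ⟨⟨s, has⟩, ?_⟩
  have hea : a * x * a = a := hx.symm
  have hee : a * x * (a * x) = a * x := by rw [← mul_assoc, hea]
  have heI : a * x ∈ I := I.mul_mem_right _ _ ha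
  have hase : a * (a * s * x) = a * x := by rw [← mul_assoc, ← mul_assoc, ← sq, ← has]
  generalize a * x = e at hea hee heI hase
  have hvu : e * (a * s * x) * e * (a * e) = e := by
    refine corner_mul_eq_of_mul_eq (fun _ => hs.eq_zero_of_sq_eq_zero)
      (I.mul_mem_right _ _ (I.mul_mem_right _ _ heI)) ?_ ?_ ?_ ?_
    · calc a * e * (e * (a * s * x) * e) = a * (e * e * a) * s * x * e := by noncomm_ring
        _ = a * (a * s * x) * e := by rw [hee, hea]; noncomm_ring
        _ = e := by rw [hase, hee]
    · rw [mul_assoc, hee]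
    · rw [← mul_assoc, ← mul_assoc, hee]
    · rw [mul_assoc, hee]
  refine ⟨e * (a * s * x) * e, ?_⟩
  calc a = e * (a * s * x) * e * (a * e) * a := by rw [hvu, hea]
    _ = e * (a * s * x) * e * (a * (e * a)) := by noncomm_ring
    _ = e * (a * s * x) * e * a ^ 2 := by rw [hea, sq]

structure IsGroupInverse (k k' : R) : Prop where
  comm : k * k' = k' * k
  mul_inv_mul : k * k' * k = k
  inv_mul_inv : k' * k * k' = k'

theorem IsStronglyRegularElem.exists_isGroupInverse {k : R} (hk : IsStronglyRegularElem k) :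
    ∃ k', IsGroupInverse k k' := by
  obtain ⟨⟨z, hz⟩, ⟨t, ht⟩⟩ := hk
  have htk : t * k = k * z :=
    calc t * k = t * (k ^ 2 * z) := by rw [← hz]
      _ = t * k ^ 2 * z := by noncomm_ring
      _ = k * z := by rw [← ht]
  have hkkz : k * (k * z) = k := by rw [← mul_assoc, ← sq, ← hz]
  have hkzk : k * z * k = k := by rw [← htk, mul_assoc, ← sq, ← ht]
  have hleft : k * (t * (k * z)) = k * z := by rw [← mul_assoc t, htk, ← mul_assoc, hkkz]
  have hright : t * (k * z) * k = k * z := by rw [mul_assoc, hkzk, htk]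
  -- `k z = t k` is the idempotent `k k#`
  refine ⟨t * (k * z), hleft.trans hright.symm, by rw [hleft, hkzk], ?_⟩
  rw [hright, ← mul_assoc t, htk, ← mul_assoc, ← mul_assoc, hkzk]

theorem IsGroupInverse.isUnit_add_one_sub {k k' : R} (h : IsGroupInverse k k') :
    IsUnit (k + (1 - k * k')) := by
  have hkp : k * (k * k') = k := by rw [h.comm, ← mul_assoc, h.mul_inv_mul]
  have hpk' : k * k' * k' = k' := by rw [h.comm, h.inv_mul_inv]
  have hk'p : k' * (k * k') = k' := by rw [← mul_assoc, h.inv_mul_inv]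
  have hpp : k * k' * (k * k') = k * k' := by rw [← mul_assoc, h.mul_inv_mul]
  refine ⟨⟨k + (1 - k * k'), k' + (1 - k * k'), ?_, ?_⟩, rfl⟩
  · calc (k + (1 - k * k')) * (k' + (1 - k * k'))
          = 1 + (k - k * (k * k')) + (k' - k * k' * k') - (k * k' - k * k' * (k * k')) := by
            noncomm_ring
      _ = 1 := by rw [hkp, hpk', hpp]; abel
  · calc (k' + (1 - k * k')) * (k + (1 - k * k'))
          = 1 + (k' * k - k * k') + (k' - k' * (k * k')) + (k - k * k' * k)
            - (k * k' - k * k' * (k * k')) := by noncomm_ring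
      _ = 1 := by rw [hk'p, h.mul_inv_mul, hpp, ← h.comm]; abel

theorem isUnit_add_one_sub_of_mul_eq {e p z : R} (hep : e * p = p) (hpe : p * e = e)
    (hpz : p * z = z) (h : IsUnit (z + (1 - p))) : IsUnit (z + (1 - e)) := by
  have hee : e * e = e :=
    calc e * e = e * (p * e) := by rw [hpe]
      _ = e := by rw [← mul_assoc, hep, hpe]
  have hpp : p * p = p :=
    calc p * p = p * (e * p) := by rw [hep]
      _ = p := by rw [← mul_assoc, hpe, hep]
  have hez : e * z = z := by rw [← hpz, ← mul_assoc, hep]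
  have hnil : IsNilpotent (e - p) := ⟨2, by
    calc (e - p) ^ 2 = e * e - e * p - p * e + p * p := by noncomm_ring
      _ = 0 := by rw [hee, hep, hpe, hpp]; abel⟩
  have key : (1 - (e - p)) * (z + (1 - p)) = z + (1 - e) :=
    calc (1 - (e - p)) * (z + (1 - p))
        = z - e * z + p * z + (1 - e) + (e * p - p * p) := by noncomm_ring
      _ = z + (1 - e) := by rw [hez, hpz, hep, hpp]; abel
  exact key ▸ hnil.isUnit_one_sub.mul h

theorem IsStronglyRegularElem.isUnit_add_one_sub {k f w : R} (hk : IsStronglyRegularElem k)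
    (hfk : f * k = k) (hf : f = k * w) : IsUnit (k + (1 - f)) := by
  obtain ⟨k', hk'⟩ := hk.exists_isGroupInverse
  refine isUnit_add_one_sub_of_mul_eq (p := k * k') ?_ ?_ hk'.mul_inv_mul hk'.isUnit_add_one_sub
  · rw [← mul_assoc, hfk]
  · rw [hf, ← mul_assoc, hk'.mul_inv_mul]

theorem isUnit_mul_sq_add_one_sub {I : TwoSidedIdeal R}
    (hS : ∀ a ∈ I, IsRegularElem a → IsStronglyRegularElem a) {a e r : R} (ha : a ∈ I)
    (he : IsIdempotentElem e) (her : e = a * r) : IsUnit (e * a ^ 2 + (1 - e)) := by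
  have hhI : e * a ∈ I := I.mul_mem_left _ _ ha
  have hhr : e * a * r = e := by rw [mul_assoc, ← her, he.eq]
  have hea : e * (e * a) = e * a := by rw [← mul_assoc, he.eq]
  have hsr : IsStronglyRegularElem (e * a) := hS _ hhI ⟨r, by rw [hhr, hea]⟩
  have hunit₁ : IsUnit (e * a + (1 - e)) := hsr.isUnit_add_one_sub hea hhr.symm
  obtain ⟨h', hh'⟩ := hsr.exists_isGroupInverse
  set π := e * a * h' with hπ
  have hππ : π * π = π := by rw [hπ, ← mul_assoc, hh'.mul_inv_mul]
  have heπ : e * π = π := by rw [hπ, ← mul_assoc, hea]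
  have haπ : e * a * π = e * a := by rw [hπ, hh'.comm, ← mul_assoc, hh'.mul_inv_mul]
  have hπa : a * (r * a * h') = π := by rw [hπ, ← mul_assoc, ← mul_assoc, ← her]
  have hπaI : π * a ∈ I := I.mul_mem_right _ _ (I.mul_mem_right _ _ hhI)
  have hππa : π * (π * a) = π * a := by rw [← mul_assoc, hππ]
  have hπag : π * a * (r * a * h') = π := by rw [mul_assoc, hπa, hππ]
  have hunit₂ : IsUnit (π * a + (1 - π)) :=
    (hS _ hπaI ⟨r * a * h', by rw [hπag, hππa]⟩).isUnit_add_one_sub hππa hπag.symm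
  have key : (e * a + (1 - e)) * (π * a + (1 - π)) = e * a ^ 2 + (1 - e) :=
    calc (e * a + (1 - e)) * (π * a + (1 - π))
        = e * a * π * a + (e * a - e * a * π) + (1 - e) + (e * π - π) * (1 - a) := by
          noncomm_ring
      _ = e * a ^ 2 + (1 - e) := by rw [haπ, heπ]; noncomm_ring
  exact key ▸ hunit₁.mul hunit₂

theorem squareStable_of_forall_isStronglyRegularElem {I : TwoSidedIdeal R} (hI : ExchangeIdeal I)
    (hS : ∀ a ∈ I, IsRegularElem a → IsStronglyRegularElem a) : SquareStable I := by
  rintro a ha b ⟨x, y, hxy⟩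
  obtain ⟨e, he, ⟨c, hc⟩, ⟨d, hd⟩⟩ := hI (a * x) (I.mul_mem_right _ _ ha)
  have hby : 1 - a * x = b * y := by rw [← hxy, add_sub_cancel_left]
  refine ⟨y * d * (1 - a ^ 2), ?_⟩
  have key : a ^ 2 + b * (y * d * (1 - a ^ 2)) = e * a ^ 2 + (1 - e) :=
    calc a ^ 2 + b * (y * d * (1 - a ^ 2)) = a ^ 2 + (1 - a * x) * d * (1 - a ^ 2) := by
          rw [hby]; noncomm_ring
      _ = e * a ^ 2 + (1 - e) := by rw [← hd]; noncomm_ring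
  rw [key]
  exact isUnit_mul_sq_add_one_sub hS ha he (by rw [hc, mul_assoc])

end

theorem stmt12 {R : Type*} [Ring R] (I : TwoSidedIdeal R) (hI : ExchangeIdeal I) :
    SquareStable I ↔ ∀ a ∈ I, IsRegularElem a → IsStronglyRegularElem a :=
  ⟨fun hs _ => isStronglyRegularElem_of_squareStable hs,
    squareStable_of_forall_isStronglyRegularElem hI⟩
end

section
/- If I is a square stable ideal of a ring R and a ∈ I is regular, then a ∈ a²R. -/
/-!
Write `a = a c a` and `e = a c`, an idempotent with `e a = a`. Since `a c + (1 - e) = 1`, square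
stability gives a unit `u = a² + (1 - e) t`; multiplying by `e` kills the second summand, so
`e u = a²`. Hence `e = a² u⁻¹` and `a = e a = a² (u⁻¹ a)`.
-/

section

variable {R : Type*} [Ring R]

lemma isIdempotentElem_mul_of_eq_mul_mul {a c : R} (hc : a = a * c * a) :
    IsIdempotentElem (a * c) := by
  rw [IsIdempotentElem, ← mul_assoc, ← hc]

lemma IsIdempotentElem.mul_add_one_sub_mul {e : R} (he : IsIdempotentElem e) (x t : R) :
    e * (x + (1 - e) * t) = e * x := by
  rw [mul_add, ← mul_assoc, he.mul_one_sub_self, zero_mul, add_zero]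

lemma exists_eq_sq_mul_of_isUnit {a c t : R} (hc : a = a * c * a)
    (hu : IsUnit (a ^ 2 + (1 - a * c) * t)) : ∃ x : R, a = a ^ 2 * x := by
  obtain ⟨u, hu⟩ := hu
  have hea : a * c * a = a := hc.symm
  have heu : a * c * u = a ^ 2 := by
    rw [hu, (isIdempotentElem_mul_of_eq_mul_mul hc).mul_add_one_sub_mul, sq, ← mul_assoc, hea]
  have he : a * c = a ^ 2 * ↑u⁻¹ := by
    rw [← heu, mul_assoc, u.mul_inv, mul_one]
  exact ⟨↑u⁻¹ * a, by rw [← mul_assoc, ← he, hea]⟩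

end

theorem stmt13 {R : Type*} [Ring R] (I : TwoSidedIdeal R) (hI : SquareStable I)
    (a : R) (ha : a ∈ I) (hr : IsRegularElem a) : ∃ x : R, a = a ^ 2 * x := by
  obtain ⟨c, hc⟩ := hr
  obtain ⟨t, hu⟩ := hI a ha (1 - a * c) ⟨c, 1, by rw [mul_one, add_sub_cancel]⟩
  exact exists_eq_sq_mul_of_isUnit hc hu
end

section
/- Every exchange ideal of an abelian ring (a ring in which all idempotents are central) is square stable. -/
/-! Given `a * x + b * y = 1`, the exchange property for `a * x ∈ I` gives an idempotent
`e = a * z` with `1 - e ∈ (1 - a * x)R = b * y * R`. As `e` is central, `r ↦ e * r + (1 - e)` is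
multiplicative, so `u = e * a + (1 - e)` has the right inverse `e * z + (1 - e)`. Abelian rings
are Dedekind-finite (if `a * b = 1` then `b * a` is a central idempotent), so `u` is a unit, and
so is `u ^ 2 = a ^ 2 + (1 - e) * (1 - a ^ 2) ∈ a ^ 2 + bR`. -/

section AbelianRing

variable {R : Type*} [Ring R]

theorem mul_eq_one_comm_of_forall_idempotent_central
    (habel : ∀ e : R, IsIdempotentElem e → ∀ r : R, e * r = r * e) {a b : R} (h : a * b = 1) :
    b * a = 1 := by
  have hba : IsIdempotentElem (b * a) := by
    rw [IsIdempotentElem, mul_assoc, ← mul_assoc a, h, one_mul]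
  calc b * a = b * a * (a * b) := by rw [h, mul_one]
    _ = a * (b * a) * b := by rw [← mul_assoc, habel _ hba a, mul_assoc]
    _ = 1 := by rw [← mul_assoc, h, one_mul, h]

/-- The unital embedding of the corner ring `eR` into `R`, for a central idempotent `e`. -/
def cornerEmbed (e r : R) : R := e * r + (1 - e)

theorem cornerEmbed_mul {e : R} (he : IsIdempotentElem e) (hc : ∀ r : R, e * r = r * e)
    (a b : R) : cornerEmbed e a * cornerEmbed e b = cornerEmbed e (a * b) := by
  have hae : e * a * e = e * a := by rw [mul_assoc, ← hc a, ← mul_assoc, he.eq]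
  have hee : (1 - e) * e = 0 := by rw [sub_mul, one_mul, he.eq, sub_self]
  calc cornerEmbed e a * cornerEmbed e b
      = e * a * e * b + (e * a - e * a * e) + (1 - e) * e * b + ((1 - e) - (1 - e) * e) := by
        unfold cornerEmbed; noncomm_ring
    _ = cornerEmbed e (a * b) := by
        rw [hae, hee, sub_self, zero_mul, mul_assoc, cornerEmbed]; abel

theorem isUnit_cornerEmbed_of_eq_mul
    (habel : ∀ e : R, IsIdempotentElem e → ∀ r : R, e * r = r * e)
    {e a z : R} (he : IsIdempotentElem e) (hez : e = a * z) : IsUnit (cornerEmbed e a) := by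
  have hinv : cornerEmbed e a * cornerEmbed e z = 1 := by
    rw [cornerEmbed_mul he (habel e he), ← hez, cornerEmbed, he.eq, add_sub_cancel]
  exact isUnit_iff_exists.mpr
    ⟨_, hinv, mul_eq_one_comm_of_forall_idempotent_central habel hinv⟩

end AbelianRing

theorem stmt14 {R : Type*} [Ring R]
    (habel : ∀ e : R, IsIdempotentElem e → ∀ r : R, e * r = r * e)
    (I : TwoSidedIdeal R) (hI : ExchangeIdeal I) : SquareStable I := by
  rintro a ha b ⟨x, y, hxy⟩
  obtain ⟨e, he, ⟨c, hec⟩, d, hd⟩ := hI _ (I.mul_mem_right a x ha)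
  have hby : b * y = 1 - a * x := eq_sub_of_add_eq' hxy
  refine ⟨y * d * (1 - a ^ 2), ?_⟩
  have hsq : a ^ 2 + b * (y * d * (1 - a ^ 2)) = cornerEmbed e a ^ 2 := by
    calc a ^ 2 + b * (y * d * (1 - a ^ 2)) = a ^ 2 + (b * y) * d * (1 - a ^ 2) := by noncomm_ring
      _ = cornerEmbed e (a ^ 2) := by rw [hby, ← hd, cornerEmbed]; noncomm_ring
      _ = cornerEmbed e a ^ 2 := by rw [sq, sq, cornerEmbed_mul he (habel e he)]
  rw [hsq]
  exact (isUnit_cornerEmbed_of_eq_mul habel he (hec.trans (mul_assoc a x c))).pow 2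
end

section
/- Let I be a regular ideal of a ring R and x₁, ..., xₘ ∈ I. Then there exists an idempotent e ∈ I such that xᵢ ∈ eRe for all i = 1, ..., m. -/
/-!
A finite subset `S` of a regular ideal `I` has a left unit: an idempotent `f ∈ I` with
`f * s = s` for all `s ∈ S`. Adding one element `b` at a time, the defect `c = (1 - f) * b`
lies in `I`, so `c = c * y * c`; then `g = c * y` is an idempotent with `f * g = 0` and
`g * c = c`, and `g + f - g * f` is a left unit for `S ∪ {b}`. Passing to `Rᵐᵒᵖ` gives a right
unit `e ∈ I` for `S ∪ {f}`, and `e + f - e * f` is then an idempotent of `I` that is a unit on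
both sides for `S`, i.e. `S ⊆ (e + f - e * f) R (e + f - e * f)`.
-/

section Ring

variable {R : Type*} [Ring R]

theorem IsIdempotentElem.add_sub_mul_of_mul_mul_eq {p q : R} (hp : IsIdempotentElem p)
    (hq : IsIdempotentElem q) (h : q * p * q = q * p) : IsIdempotentElem (p + q - p * q) := by
  have h' : q * (p * q) = q * p := by rw [← mul_assoc, h]
  simp only [IsIdempotentElem, mul_add, add_mul, sub_mul, mul_sub, mul_assoc, hp.eq, hq.eq,
    hp.mul_self_mul, h']
  abel

theorem add_sub_mul_mul_of_mul_eq (p : R) {q a : R} (h : q * a = a) :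
    (p + q - p * q) * a = a := by
  rw [sub_mul, add_mul, mul_assoc, h, add_sub_cancel_left]

theorem mul_add_sub_mul_of_mul_eq {p : R} (q : R) {a : R} (h : a * p = a) :
    a * (p + q - p * q) = a := by
  rw [mul_sub, mul_add, ← mul_assoc, h, add_sub_cancel_right]

end Ring

namespace RegularIdeal

variable {R : Type*} [Ring R] {I : TwoSidedIdeal R}

theorem op (hI : RegularIdeal I) : RegularIdeal I.op := by
  intro a ha
  obtain ⟨x, hx⟩ := hI a.unop (TwoSidedIdeal.mem_op_iff.mp ha)
  exact ⟨MulOpposite.op x, MulOpposite.unop_injective (by simpa [mul_assoc] using hx)⟩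

theorem exists_idempotent_left_unit_pair (hI : RegularIdeal I) {f b : R} (hfI : f ∈ I)
    (hf : IsIdempotentElem f) (hb : b ∈ I) :
    ∃ f' ∈ I, IsIdempotentElem f' ∧ f' * f = f ∧ f' * b = b := by
  set c := (1 - f) * b with hc
  have hcI : c ∈ I := I.mul_mem_left _ _ hb
  obtain ⟨y, hy⟩ := hI c hcI
  set g := c * y
  have hgc : g * c = c := hy.symm
  have hg : IsIdempotentElem g := by
    change c * y * (c * y) = c * y
    rw [← mul_assoc, hgc]
  have hfg : f * g = 0 := by
    rw [← mul_assoc, ← mul_assoc, hf.mul_one_sub_self, zero_mul, zero_mul]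
  refine ⟨g + f - g * f, I.sub_mem (I.add_mem (I.mul_mem_right _ _ hcI) hfI)
    (I.mul_mem_left _ _ hfI), hg.add_sub_mul_of_mul_mul_eq hf (by rw [hfg, zero_mul]),
    add_sub_mul_mul_of_mul_eq g hf.eq, ?_⟩
  calc (g + f - g * f) * b = f * b + g * c := by rw [hc]; noncomm_ring
    _ = b := by rw [hgc, hc]; noncomm_ring

theorem exists_idempotent_left_unit_of_finite (hI : RegularIdeal I) (S : Set R) (hS : S.Finite)
    (hSI : S ⊆ I) : ∃ f ∈ I, IsIdempotentElem f ∧ ∀ s ∈ S, f * s = s := by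
  induction S, hS using Set.Finite.induction_on with
  | empty => exact ⟨0, I.zero_mem, .zero, by simp⟩
  | @insert b S _ _ ih =>
    obtain ⟨f, hfI, hf, hfS⟩ := ih ((Set.subset_insert b S).trans hSI)
    obtain ⟨f', hf'I, hf', hf'f, hf'b⟩ :=
      hI.exists_idempotent_left_unit_pair hfI hf (hSI (Set.mem_insert b S))
    refine ⟨f', hf'I, hf', Set.forall_mem_insert.mpr ⟨hf'b, fun s hs => ?_⟩⟩
    rw [← hfS s hs, ← mul_assoc, hf'f]

theorem exists_idempotent_right_unit_of_finite (hI : RegularIdeal I) (S : Set R)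
    (hS : S.Finite) (hSI : S ⊆ I) : ∃ e ∈ I, IsIdempotentElem e ∧ ∀ s ∈ S, s * e = s := by
  obtain ⟨e, heI, he, heS⟩ :=
    hI.op.exists_idempotent_left_unit_of_finite (MulOpposite.unop ⁻¹' S)
    (hS.preimage MulOpposite.unop_injective.injOn)
    (fun s hs => TwoSidedIdeal.mem_op_iff.mpr (hSI hs))
  exact ⟨e.unop, TwoSidedIdeal.mem_op_iff.mp heI, congrArg MulOpposite.unop he,
    fun s hs => MulOpposite.op_injective (heS (MulOpposite.op s) hs)⟩

end RegularIdeal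

theorem stmt15 {R : Type*} [Ring R] (I : TwoSidedIdeal R) (hI : RegularIdeal I)
    (m : ℕ) (x : Fin m → R) (hx : ∀ i, x i ∈ I) :
    ∃ e ∈ I, IsIdempotentElem e ∧ ∀ i, ∃ r : R, x i = e * r * e := by
  obtain ⟨f, hfI, hf, hfx⟩ := hI.exists_idempotent_left_unit_of_finite (Set.range x)
    (Set.finite_range x) (Set.range_subset_iff.mpr hx)
  obtain ⟨e, heI, he, hxe⟩ :=
    hI.exists_idempotent_right_unit_of_finite (insert f (Set.range x))
    ((Set.finite_range x).insert f) (Set.insert_subset hfI (Set.range_subset_iff.mpr hx))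
  have hfe : f * e = f := hxe f (Set.mem_insert f _)
  refine ⟨e + f - e * f, I.sub_mem (I.add_mem heI hfI) (I.mul_mem_left _ _ hfI),
    he.add_sub_mul_of_mul_mul_eq hf (by rw [hfe, hf.eq]), fun i => ⟨x i, ?_⟩⟩
  rw [add_sub_mul_mul_of_mul_eq e (hfx _ ⟨i, rfl⟩),
    mul_add_sub_mul_of_mul_eq f (hxe _ (Set.mem_insert_of_mem f ⟨i, rfl⟩))]
end

section
/- Let I be a regular ideal of a ring R. Then I is square stable if and only if I is reduced, i.e., x ∈ I and x² = 0 imply x = 0. -/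
/-!
If `a = a s a`, then `a s` and `s a` are idempotents of `I`. When `I` is reduced every idempotent
`e ∈ I` is central, because `e r (1 - e)` and `(1 - e) r e` are square-zero elements of `I`.
Then `a s = s a =: e`, so `a` is a unit of the corner ring `e R e` (with inverse `s e`) and
`a ^ 2 + (1 - e) = (a + (1 - e)) ^ 2` is a unit of `R`. Multiplying `a x + b y = 1` by the
central idempotent `1 - e`, which kills `a`, gives `b ((1 - e) y) = 1 - e`.
Conversely, if `x ∈ I` has `x ^ 2 = 0` and `x = x s x`, square stability applied to
`x s + (1 - x s) = 1` makes `(1 - x s) y` a unit, which forces the idempotent `x s` to vanish.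
-/

section

variable {R : Type*} [Ring R]

theorem isIdempotentElem_mul_of_mul_mul_eq {a s : R} (h : a * s * a = a) :
    IsIdempotentElem (a * s) := by
  rw [IsIdempotentElem, ← mul_assoc, h]

theorem isIdempotentElem_mul_of_mul_mul_eq' {a s : R} (h : a * s * a = a) :
    IsIdempotentElem (s * a) := by
  rw [IsIdempotentElem, mul_assoc, ← mul_assoc a, h]

theorem IsIdempotentElem.eq_zero_of_isUnit_one_sub_mul {e y : R} (he : IsIdempotentElem e)
    (hu : IsUnit ((1 - e) * y)) : e = 0 :=
  hu.mul_left_eq_zero.mp (by rw [← mul_assoc, he.mul_one_sub_self, zero_mul])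

theorem TwoSidedIdeal.commute_of_isIdempotentElem_mem {I : TwoSidedIdeal R}
    (hred : ∀ x ∈ I, x ^ 2 = 0 → x = 0) {e : R} (he : IsIdempotentElem e) (heI : e ∈ I)
    (r : R) : Commute e r := by
  have left : e * r * (1 - e) = 0 := by
    refine hred _ (I.mul_mem_right _ _ (I.mul_mem_right _ _ heI)) ?_
    rw [sq, mul_assoc (e * r), ← mul_assoc (1 - e), ← mul_assoc (1 - e), he.one_sub_mul_self,
      zero_mul, zero_mul, mul_zero]
  have right : (1 - e) * r * e = 0 := by
    refine hred _ (I.mul_mem_left _ _ heI) ?_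
    rw [sq, mul_assoc ((1 - e) * r), ← mul_assoc e, ← mul_assoc e, he.mul_one_sub_self,
      zero_mul, zero_mul, mul_zero]
  rw [mul_one_sub, sub_eq_zero] at left
  rw [one_sub_mul, sub_mul, sub_eq_zero] at right
  exact left.trans right.symm

theorem IsIdempotentElem.isUnit_add_one_sub {e a t : R} (he : IsIdempotentElem e)
    (hae : a * e = a) (hea : e * a = a) (hte : t * e = t) (het : e * t = t)
    (hat : a * t = e) (hta : t * a = e) : IsUnit (a + (1 - e)) := by
  refine ⟨⟨a + (1 - e), t + (1 - e), ?_, ?_⟩, rfl⟩ <;>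
  · simp only [mul_add, add_mul, mul_one_sub, one_sub_mul, he.eq, hae, hea, hte, het, hat, hta]
    abel

theorem IsIdempotentElem.add_one_sub_sq {e a : R} (he : IsIdempotentElem e)
    (hae : a * e = a) (hea : e * a = a) : (a + (1 - e)) ^ 2 = a ^ 2 + (1 - e) := by
  rw [sq, sq, add_mul, mul_add, mul_add, mul_one_sub, one_sub_mul, hae, hea, sub_self,
    he.one_sub.eq, add_zero, zero_add]

theorem mul_comm_of_mul_mul_eq_of_commute {a s : R} (h : a * s * a = a)
    (he : ∀ r, Commute (a * s) r) (hf : ∀ r, Commute (s * a) r) : a * s = s * a :=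
  calc a * s = s * a * a * s := by rw [(hf a).eq, ← mul_assoc, h]
    _ = s * (a * s * a) := by rw [(he a).eq]; simp only [mul_assoc]
    _ = s * a := by rw [h]

theorem isUnit_sq_add_one_sub_mul_of_commute {a s : R} (h : a * s * a = a)
    (he : ∀ r, Commute (a * s) r) (hf : ∀ r, Commute (s * a) r) :
    IsUnit (a ^ 2 + (1 - a * s)) := by
  have idem := isIdempotentElem_mul_of_mul_mul_eq h
  have hae : a * (a * s) = a := by rw [← (he a).eq, h]
  have hsa := mul_comm_of_mul_mul_eq_of_commute h he hf
  rw [← idem.add_one_sub_sq hae h]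
  refine (idem.isUnit_add_one_sub (t := s * (a * s)) hae h ?_ ?_ ?_ ?_).pow 2
  · rw [mul_assoc, idem.eq]
  · rw [← mul_assoc, (he s).eq, mul_assoc, idem.eq]
  · rw [← mul_assoc, idem.eq]
  · rw [mul_assoc, h, hsa]

theorem mul_one_sub_mul_eq_one_sub_of_add_eq_one {e a b x y : R} (hb : Commute e b)
    (hea : e * a = a) (h : a * x + b * y = 1) : b * ((1 - e) * y) = 1 - e := by
  have hkill : (1 - e) * a = 0 := by rw [one_sub_mul, hea, sub_self]
  calc b * ((1 - e) * y) = (1 - e) * (b * y) := by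
        rw [← mul_assoc, ← ((Commute.one_left b).sub_left hb).eq, mul_assoc]
    _ = (1 - e) * (a * x + b * y) := by
        rw [mul_add, ← mul_assoc (1 - e) a, hkill, zero_mul, zero_add]
    _ = 1 - e := by rw [h, mul_one]

end

theorem stmt17 {R : Type*} [Ring R] (I : TwoSidedIdeal R) (hI : RegularIdeal I) :
    SquareStable I ↔ ∀ x ∈ I, x ^ 2 = 0 → x = 0 := by
  constructor
  · intro hss x hx hx2
    obtain ⟨s, hs⟩ := hI x hx
    obtain ⟨y, hy⟩ := hss x hx (1 - x * s) ⟨s, 1, by rw [mul_one, add_sub_cancel]⟩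
    rw [hx2, zero_add] at hy
    rw [hs, (isIdempotentElem_mul_of_mul_mul_eq hs.symm).eq_zero_of_isUnit_one_sub_mul hy,
      zero_mul]
  · rintro hred a ha b ⟨x, y, hxy⟩
    obtain ⟨s, hs⟩ := hI a ha
    have he := I.commute_of_isIdempotentElem_mem hred (isIdempotentElem_mul_of_mul_mul_eq hs.symm)
      (I.mul_mem_right _ _ ha)
    have hf := I.commute_of_isIdempotentElem_mem hred (isIdempotentElem_mul_of_mul_mul_eq' hs.symm)
      (I.mul_mem_left _ _ ha)
    refine ⟨(1 - a * s) * y, ?_⟩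
    rw [mul_one_sub_mul_eq_one_sub_of_add_eq_one (he b) hs.symm hxy]
    exact isUnit_sq_add_one_sub_mul_of_commute hs.symm he hf
end

section
/- Let I be a regular ideal of a ring R. Then I is square stable if and only if whenever aR + bR = R with a ∈ 1 + I and b ∈ R, there exists y ∈ R such that a² + by is a unit of R. -/
/-!
Regularity together with square stability leaves no nonzero square-zero elements in `I`, so the
idempotents of `I` are central. For `a ∈ 1 + I`, writing `a - 1 = (a - 1) z (a - 1)` gives an
idempotent `e = (a - 1) z ∈ I` with `a = e a + (1 - e)`; square stability applied to `e a ∈ I`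
produces a unit `u`, and the corner unit `e u + (1 - e)` is `a² + b y'`.
Conversely, for `a ∈ I` with `a x + t = 1`, let `a t = a t w a t` and `n = 1 - w a t`. Then
`a' = a + t n` lies in `1 + I`, is still comaximal with `t`, and `a t n = 0` gives
`a'² ∈ a² + t R`.
-/

theorem IsIdempotentElem.isUnit_mul_add_one_sub {R : Type*} [Ring R] {e : R}
    (he : IsIdempotentElem e) {u : Rˣ} (hu : Commute e u) : IsUnit (e * u + (1 - e)) := by
  have key : ∀ v v' : R, Commute e v → v * v' = 1 →
      (e * v + (1 - e)) * (e * v' + (1 - e)) = 1 := by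
    intro v v' hv hvv'
    calc (e * v + (1 - e)) * (e * v' + (1 - e))
        = e * (v * e) * v' + e * v - e * (v * e) + (1 - e) * e * v' + (1 - e) * (1 - e) := by
          noncomm_ring
      _ = e * e * (v * v') + e * v - e * e * v + (1 - e) * e * v' + (1 - e) * (1 - e) := by
          rw [← hv.eq]; noncomm_ring
      _ = 1 := by rw [hvv', he.one_sub_mul_self, he.one_sub.eq, he.eq]; noncomm_ring
  exact ⟨⟨_, _, key _ _ hu u.mul_inv, key _ _ hu.units_inv_right u.inv_mul⟩, rfl⟩

namespace SquareStable

variable {R : Type*} [Ring R] {I : TwoSidedIdeal R}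

theorem exists_eq_mul_self_mul (hI : RegularIdeal I) (hSS : SquareStable I) {w : R}
    (hw : w ∈ I) : ∃ s : R, w = w * w * s := by
  obtain ⟨z, hz⟩ := hI w hw
  obtain ⟨Y, u, hu⟩ := hSS w hw (1 - w * z) ⟨z, 1, by noncomm_ring⟩
  have hwzu : w * z * u = w * w := by
    rw [hu, pow_two]
    calc w * z * (w * w + (1 - w * z) * Y)
        = (w * z * w) * w + w * z * Y - (w * z * w) * z * Y := by noncomm_ring
      _ = w * w := by rw [← hz]; noncomm_ring
  refine ⟨↑u⁻¹ * w, ?_⟩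
  calc w = w * z * w := hz
    _ = w * z * u * (↑u⁻¹ * w) := by simp [mul_assoc]
    _ = w * w * (↑u⁻¹ * w) := by rw [hwzu]

theorem eq_zero_of_mul_self_eq_zero (hI : RegularIdeal I) (hSS : SquareStable I) {n : R}
    (hn : n ∈ I) (hnn : n * n = 0) : n = 0 := by
  obtain ⟨s, hs⟩ := hSS.exists_eq_mul_self_mul hI hn
  rw [hs, hnn, zero_mul]

theorem commute_of_isIdempotentElem (hI : RegularIdeal I) (hSS : SquareStable I) {e : R}
    (he : e ∈ I) (hee : IsIdempotentElem e) (r : R) : Commute e r := by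
  have hleft : e * r * (1 - e) = 0 := by
    refine hSS.eq_zero_of_mul_self_eq_zero hI (I.mul_mem_right _ _ (I.mul_mem_right _ _ he)) ?_
    calc e * r * (1 - e) * (e * r * (1 - e)) = e * r * ((1 - e) * e) * r * (1 - e) := by
          noncomm_ring
      _ = 0 := by rw [hee.one_sub_mul_self]; noncomm_ring
  have hright : (1 - e) * r * e = 0 := by
    refine hSS.eq_zero_of_mul_self_eq_zero hI (I.mul_mem_left _ _ he) ?_
    calc (1 - e) * r * e * ((1 - e) * r * e) = (1 - e) * r * (e * (1 - e)) * r * e := by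
          noncomm_ring
      _ = 0 := by rw [hee.mul_one_sub_self]; noncomm_ring
  rw [mul_sub, mul_one, sub_eq_zero] at hleft
  rw [sub_mul, sub_mul, one_mul, sub_eq_zero] at hright
  exact hleft.trans hright.symm

theorem exists_isUnit_sq_add_mul_of_sub_one_mem (hI : RegularIdeal I) (hSS : SquareStable I)
    {a t x : R} (ha : a - 1 ∈ I) (hxt : a * x + t = 1) : ∃ Y : R, IsUnit (a ^ 2 + t * Y) := by
  obtain ⟨z, hz⟩ := hI (a - 1) ha
  set e := (a - 1) * z
  have heI : e ∈ I := I.mul_mem_right _ _ ha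
  have hee : IsIdempotentElem e := by
    change (a - 1) * z * ((a - 1) * z) = (a - 1) * z
    rw [← mul_assoc, ← hz]
  have hcent := hSS.commute_of_isIdempotentElem hI heI hee
  set c := e * a
  have hsq : a ^ 2 = c ^ 2 + (1 - e) := by
    have ha_eq : a = c + (1 - e) := by
      calc a = e * (a - 1) + 1 := by rw [← hz]; abel
        _ = c + (1 - e) := by noncomm_ring
    have hc_left : c * (1 - e) = 0 := by
      rw [show c = a * e from (hcent a).eq, mul_assoc, hee.mul_one_sub_self, mul_zero]
    have hc_right : (1 - e) * c = 0 := by rw [← mul_assoc, hee.one_sub_mul_self, zero_mul]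
    calc a ^ 2 = (c + (1 - e)) * (c + (1 - e)) := by rw [← ha_eq, pow_two]
      _ = c * c + c * (1 - e) + (1 - e) * c + (1 - e) * (1 - e) := by noncomm_ring
      _ = c ^ 2 + (1 - e) := by rw [hc_left, hc_right, hee.one_sub.eq]; noncomm_ring
  have hcomax : c * x + (e * t + (1 - e)) * 1 = 1 := by
    calc c * x + (e * t + (1 - e)) * 1 = e * (a * x + t) + (1 - e) := by
          simp only [c]; noncomm_ring
      _ = 1 := by rw [hxt]; noncomm_ring
  obtain ⟨Y, u, hu⟩ := hSS c (I.mul_mem_right _ _ heI) (e * t + (1 - e)) ⟨x, 1, hcomax⟩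
  refine ⟨e * Y, ?_⟩
  have hec : e * c = c := by rw [← mul_assoc, hee.eq]
  have hcorner : e * u + (1 - e) = a ^ 2 + t * (e * Y) := by
    calc e * u + (1 - e)
        = e * c * c + e * e * t * Y + e * (1 - e) * Y + (1 - e) := by rw [hu]; noncomm_ring
      _ = c ^ 2 + (1 - e) + e * t * Y := by
          rw [hec, hee.eq, hee.mul_one_sub_self]; noncomm_ring
      _ = a ^ 2 + t * (e * Y) := by rw [(hcent t).eq, hsq]; noncomm_ring
  exact hcorner ▸ hee.isUnit_mul_add_one_sub (hcent u)

end SquareStable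

theorem exists_isUnit_sq_add_mul_of_mem {R : Type*} [Ring R] {I : TwoSidedIdeal R}
    (hI : RegularIdeal I)
    (h : ∀ a b : R, a - 1 ∈ I → (∃ x y : R, a * x + b * y = 1) →
      ∃ y : R, IsUnit (a ^ 2 + b * y))
    {a t x : R} (ha : a ∈ I) (hxt : a * x + t = 1) : ∃ Y : R, IsUnit (a ^ 2 + t * Y) := by
  have hat : a * t ∈ I := I.mul_mem_right _ _ ha
  obtain ⟨w, hw⟩ := hI (a * t) hat
  set n := 1 - w * (a * t)
  have hatn : a * t * n = 0 := by
    calc a * t * (1 - w * (a * t)) = a * t - a * t * w * (a * t) := by noncomm_ring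
      _ = 0 := by rw [← hw, sub_self]
  have ha' : a + t * n - 1 ∈ I := by
    have : a + t * n - 1 = a - a * x - t * w * (a * t) := by
      calc a + t * n - 1 = (a * x + t) + (a - a * x - t * w * (a * t)) - 1 := by
            simp only [n]; noncomm_ring
        _ = a - a * x - t * w * (a * t) := by rw [hxt]; noncomm_ring
    rw [this]
    exact I.sub_mem (I.sub_mem ha (I.mul_mem_right _ _ ha)) (I.mul_mem_left _ _ hat)
  have hcomax : (a + t * n) * x + t * (1 - n * x) = 1 := by
    calc (a + t * n) * x + t * (1 - n * x) = a * x + t := by noncomm_ring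
      _ = 1 := hxt
  obtain ⟨Y, hY⟩ := h (a + t * n) t ha' ⟨x, 1 - n * x, hcomax⟩
  refine ⟨n * (a + t * n) + Y, ?_⟩
  convert hY using 1
  calc a ^ 2 + t * (n * (a + t * n) + Y)
      = a ^ 2 + a * t * n + t * n * (a + t * n) + t * Y := by rw [hatn]; noncomm_ring
    _ = (a + t * n) ^ 2 + t * Y := by noncomm_ring

theorem stmt18 {R : Type*} [Ring R] (I : TwoSidedIdeal R) (hI : RegularIdeal I) :
    SquareStable I ↔
      ∀ a b : R, a - 1 ∈ I → (∃ x y : R, a * x + b * y = 1) →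
        ∃ y : R, IsUnit (a ^ 2 + b * y) := by
  constructor
  · rintro hSS a b ha ⟨x, y, hxy⟩
    obtain ⟨Y, hY⟩ := hSS.exists_isUnit_sq_add_mul_of_sub_one_mem hI ha hxy
    exact ⟨y * Y, by rwa [← mul_assoc]⟩
  · rintro h a ha b ⟨x, y, hxy⟩
    obtain ⟨Y, hY⟩ := exists_isUnit_sq_add_mul_of_mem hI h ha hxy
    exact ⟨y * Y, by rwa [← mul_assoc]⟩
end

section
/- Let I be a regular ideal of a ring R. Then the following are equivalent: (1) I is square stable; (2) every element of I is strongly regular; (3) every element of 1 + I is strongly regular. -/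
/-!
All three conditions are equivalent to `I` having no nonzero square-zero elements. In a regular
such ideal every idempotent is central, so each `a ∈ I` has a group inverse `w` with `a * w`
central; then `a ^ 2 + (1 - a * w) = (a + (1 - a * w)) ^ 2` is a unit, and the Peirce
decomposition along `a * w` carries strong regularity from `I` to `1 + I`.
Conversely, let `b = b * z * b ∈ I` with `b * b = 0`. Square stability applied to
`b * z + (1 - b * z) = 1` yields a unit `(1 - b * z) * y` killed on the left by `b * z`.
Strong regularity of `u = b + (1 - b * z) * (1 - z * b) ∈ 1 + I`, for which `u * (z * b) = b`
and `u * b = 0`, gives `b = q * u * (u * (z * b)) = 0`.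
-/

def IsReducedIdeal {R : Type*} [Ring R] (I : TwoSidedIdeal R) : Prop :=
  ∀ a ∈ I, a * a = 0 → a = 0

section Peirce

variable {R : Type*} [Ring R] {e x y : R}

theorem add_one_sub_mul_add_one_sub (he : IsIdempotentElem e) (hx : x * e = x) (hy : e * y = y) :
    (x + (1 - e)) * (y + (1 - e)) = x * y + (1 - e) := by
  calc (x + (1 - e)) * (y + (1 - e))
      = x * y + (x - x * e) + (y - e * y) + (1 - e) - (e - e * e) := by noncomm_ring
    _ = x * y + (1 - e) := by rw [hx, hy, he.eq]; noncomm_ring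

theorem isIdempotentElem_mul_of_mul_mul_self (h : x * y * x = x) : IsIdempotentElem (x * y) := by
  rw [IsIdempotentElem, ← mul_assoc, h]

theorem IsStronglyRegularElem.add_one_sub (hx : IsStronglyRegularElem x) (he : IsIdempotentElem e)
    (hxe : x * e = x) (hex : e * x = x) : IsStronglyRegularElem (x + (1 - e)) := by
  obtain ⟨⟨p, hp⟩, ⟨q, hq⟩⟩ := hx
  have hsq : (x + (1 - e)) ^ 2 = x ^ 2 + (1 - e) := by
    rw [sq, add_one_sub_mul_add_one_sub he hxe hex, sq]
  have hx2e : x ^ 2 * e = x ^ 2 := by rw [sq, mul_assoc, hxe]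
  have hex2 : e * x ^ 2 = x ^ 2 := by rw [sq, ← mul_assoc, hex]
  refine ⟨⟨e * p * e + (1 - e), ?_⟩, ⟨e * q * e + (1 - e), ?_⟩⟩
  · rw [hsq, add_one_sub_mul_add_one_sub he hx2e (by rw [← mul_assoc, ← mul_assoc, he.eq]),
      ← mul_assoc, ← mul_assoc, hx2e, ← hp, hxe]
  · rw [hsq, add_one_sub_mul_add_one_sub he (by rw [mul_assoc, he.eq]) hex2,
      mul_assoc, hex2, mul_assoc, ← hq, hex]

end Peirce

section GroupInverse

variable {R : Type*} [Ring R] {a w : R}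

theorem isStronglyRegularElem_of_groupInverse (h : a * w * a = a) (hc : Commute a w) :
    IsStronglyRegularElem a := by
  refine ⟨⟨w, ?_⟩, ⟨w, ?_⟩⟩
  · rw [sq, mul_assoc, hc.eq, ← mul_assoc, h]
  · rw [sq, ← mul_assoc, ← hc.eq, h]

theorem isUnit_sq_add_one_sub_mul (h₁ : a * w * a = a) (h₂ : w * a * w = w) (hc : Commute a w) :
    IsUnit (a ^ 2 + (1 - a * w)) := by
  have he := isIdempotentElem_mul_of_mul_mul_self h₁
  have hae : a * (a * w) = a := by rw [hc.eq, ← mul_assoc, h₁]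
  have hwe : w * (a * w) = w := by rw [← mul_assoc, h₂]
  have hew : a * w * w = w := by rw [hc.eq, h₂]
  have hu : IsUnit (a + (1 - a * w)) := isUnit_iff_exists.mpr ⟨w + (1 - a * w),
    by rw [add_one_sub_mul_add_one_sub he hae hew, add_sub_cancel],
    by rw [add_one_sub_mul_add_one_sub he hwe h₁, ← hc.eq, add_sub_cancel]⟩
  rw [sq, ← add_one_sub_mul_add_one_sub he hae h₁, ← sq]
  exact hu.pow 2

end GroupInverse

namespace IsReducedIdeal

variable {R : Type*} [Ring R] {I : TwoSidedIdeal R}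

theorem commute_of_isIdempotentElem (hred : IsReducedIdeal I) {e : R} (he : e ∈ I)
    (hee : IsIdempotentElem e) (r : R) : Commute e r := by
  have hl : e * r * (1 - e) = 0 := by
    refine hred _ (I.mul_mem_right _ _ (I.mul_mem_right _ _ he)) ?_
    calc e * r * (1 - e) * (e * r * (1 - e)) = e * r * ((1 - e) * e) * r * (1 - e) := by
          noncomm_ring
      _ = 0 := by rw [hee.one_sub_mul_self]; noncomm_ring
  have hr : (1 - e) * r * e = 0 := by
    refine hred _ (I.mul_mem_left _ _ he) ?_
    calc (1 - e) * r * e * ((1 - e) * r * e) = (1 - e) * r * (e * (1 - e)) * r * e := by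
          noncomm_ring
      _ = 0 := by rw [hee.mul_one_sub_self]; noncomm_ring
  calc e * r = e * r * e := by rw [← sub_eq_zero, ← hl]; noncomm_ring
    _ = r * e := by rw [eq_comm, ← sub_eq_zero, ← hr]; noncomm_ring

theorem exists_groupInverse (hreg : RegularIdeal I) (hred : IsReducedIdeal I) {a : R}
    (ha : a ∈ I) : ∃ w, a * w * a = a ∧ w * a * w = w ∧ Commute a w := by
  obtain ⟨z, hz⟩ := hreg a ha
  have he := hred.commute_of_isIdempotentElem (I.mul_mem_right _ _ ha)
    (isIdempotentElem_mul_of_mul_mul_self hz.symm)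
  have hf := hred.commute_of_isIdempotentElem (I.mul_mem_left _ _ ha)
    (show IsIdempotentElem (z * a) by rw [IsIdempotentElem, mul_assoc, ← mul_assoc a, ← hz])
  have hcomm : a * z = z * a :=
    calc a * z = a * (z * a * z) := by rw [← mul_assoc, ← mul_assoc, ← hz]
      _ = a * z * (z * a) := by rw [(hf z).eq]; noncomm_ring
      _ = z * (a * z) * a := by rw [← (he z).eq]; noncomm_ring
      _ = z * a := by rw [mul_assoc, ← hz]
  refine ⟨z * a * z, ?_, ?_, ?_⟩
  · rw [show a * (z * a * z) * a = a * z * a * z * a by noncomm_ring, ← hz, ← hz]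
  · rw [show z * a * z * a * (z * a * z) = z * (a * z * a) * (z * a * z) by noncomm_ring, ← hz,
      show z * a * (z * a * z) = z * (a * z * a) * z by noncomm_ring, ← hz]
  · change a * (z * a * z) = z * a * z * a
    rw [show a * (z * a * z) = a * z * a * z by noncomm_ring,
      show z * a * z * a = z * (a * z * a) by noncomm_ring, ← hz, hcomm]

theorem forall_isStronglyRegularElem (hreg : RegularIdeal I) (hred : IsReducedIdeal I) :
    ∀ a ∈ I, IsStronglyRegularElem a := fun _ ha =>
  have ⟨_, h, _, hc⟩ := hred.exists_groupInverse hreg ha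
  isStronglyRegularElem_of_groupInverse h hc

theorem forall_one_add_isStronglyRegularElem (hreg : RegularIdeal I) (hred : IsReducedIdeal I) :
    ∀ a : R, a - 1 ∈ I → IsStronglyRegularElem a := by
  intro a ha
  obtain ⟨w, h₁, -, hc⟩ := hred.exists_groupInverse hreg ha
  have he := isIdempotentElem_mul_of_mul_mul_self h₁
  have hce : (a - 1) * ((a - 1) * w) = a - 1 := by rw [hc.eq, ← mul_assoc, h₁]
  have hsr := hred.forall_isStronglyRegularElem hreg _ (I.add_mem (I.mul_mem_right _ w ha) ha)
  have hsplit : a = (a - 1) * w + (a - 1) + (1 - (a - 1) * w) := by noncomm_ring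
  rw [hsplit]
  refine hsr.add_one_sub he ?_ ?_
  · rw [add_mul, he.eq, hce]
  · rw [mul_add, he.eq, h₁]

theorem squareStable (hreg : RegularIdeal I) (hred : IsReducedIdeal I) : SquareStable I := by
  rintro a ha b ⟨x, y, hxy⟩
  obtain ⟨w, h₁, h₂, hc⟩ := hred.exists_groupInverse hreg ha
  have hcent := hred.commute_of_isIdempotentElem (I.mul_mem_right _ _ ha)
    (isIdempotentElem_mul_of_mul_mul_self h₁)
  refine ⟨(1 - a * w) * y, ?_⟩
  have hby : b * ((1 - a * w) * y) = 1 - a * w :=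
    calc b * ((1 - a * w) * y) = (1 - a * w) * (b * y) := by
          rw [← mul_assoc, ← ((Commute.one_left b).sub_left (hcent b)).eq, mul_assoc]
      _ = (1 - a * w) - (a - a * w * a) * x := by rw [eq_sub_of_add_eq' hxy]; noncomm_ring
      _ = 1 - a * w := by rw [h₁, sub_self, zero_mul, sub_zero]
  rw [hby]
  exact isUnit_sq_add_one_sub_mul h₁ h₂ hc

end IsReducedIdeal

section Converses

variable {R : Type*} [Ring R] {I : TwoSidedIdeal R}

theorem isReducedIdeal_of_forall_isStronglyRegularElem (h : ∀ a ∈ I, IsStronglyRegularElem a) :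
    IsReducedIdeal I := by
  intro a ha haa
  obtain ⟨⟨x, hx⟩, -⟩ := h a ha
  rw [hx, sq, haa, zero_mul]

theorem isReducedIdeal_of_squareStable (hreg : RegularIdeal I) (h : SquareStable I) :
    IsReducedIdeal I := by
  intro a ha haa
  obtain ⟨z, hz⟩ := hreg a ha
  obtain ⟨y, hu⟩ := h a ha (1 - a * z) ⟨z, 1, by noncomm_ring⟩
  have hkill : a * z * (a ^ 2 + (1 - a * z) * y) = 0 := by
    calc a * z * (a ^ 2 + (1 - a * z) * y) = a * z * (a * a) + (a * z - a * z * a * z) * y := by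
          noncomm_ring
      _ = 0 := by rw [haa, ← hz, sub_self]; noncomm_ring
  rw [hz, hu.mul_left_eq_zero.mp hkill, zero_mul]

theorem isReducedIdeal_of_forall_one_add_isStronglyRegularElem (hreg : RegularIdeal I)
    (h : ∀ a : R, a - 1 ∈ I → IsStronglyRegularElem a) : IsReducedIdeal I := by
  intro b hb hbb
  obtain ⟨z, hz⟩ := hreg b hb
  have hmem : b + (1 - b * z) * (1 - z * b) - 1 ∈ I := by
    rw [show b + (1 - b * z) * (1 - z * b) - 1 = b * (1 - z + z * z * b) - z * b by noncomm_ring]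
    exact I.sub_mem (I.mul_mem_right _ _ hb) (I.mul_mem_left _ _ hb)
  obtain ⟨-, ⟨q, hq⟩⟩ := h _ hmem
  generalize hu : b + (1 - b * z) * (1 - z * b) = u at hq
  have huf : u * (z * b) = b := by
    rw [← hu]
    calc (b + (1 - b * z) * (1 - z * b)) * (z * b)
        = b * z * b + (1 - b * z) * (z * b - z * (b * z * b)) := by noncomm_ring
      _ = b := by rw [← hz, sub_self, mul_zero, add_zero]
  have hub : u * b = 0 := by
    rw [← hu]
    calc (b + (1 - b * z) * (1 - z * b)) * b = b * b + (1 - b * z) * (b - z * (b * b)) := by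
          noncomm_ring
      _ = 0 := by rw [hbb, mul_zero, sub_zero, zero_add, sub_mul, one_mul, ← hz, sub_self]
  calc b = u * (z * b) := huf.symm
    _ = q * u ^ 2 * (z * b) := by rw [← hq]
    _ = q * u * (u * (z * b)) := by noncomm_ring
    _ = 0 := by rw [huf, mul_assoc, hub, mul_zero]

end Converses

theorem stmt19 {R : Type*} [Ring R] (I : TwoSidedIdeal R) (hI : RegularIdeal I) :
    (SquareStable I ↔ ∀ a ∈ I, IsStronglyRegularElem a) ∧
    ((∀ a ∈ I, IsStronglyRegularElem a) ↔ ∀ a : R, a - 1 ∈ I → IsStronglyRegularElem a) := by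
  have h₁ : SquareStable I ↔ IsReducedIdeal I :=
    ⟨isReducedIdeal_of_squareStable hI, fun h => h.squareStable hI⟩
  have h₂ : (∀ a ∈ I, IsStronglyRegularElem a) ↔ IsReducedIdeal I :=
    ⟨isReducedIdeal_of_forall_isStronglyRegularElem, fun h => h.forall_isStronglyRegularElem hI⟩
  have h₃ : (∀ a : R, a - 1 ∈ I → IsStronglyRegularElem a) ↔ IsReducedIdeal I :=
    ⟨isReducedIdeal_of_forall_one_add_isStronglyRegularElem hI,
      fun h => h.forall_one_add_isStronglyRegularElem hI⟩
  exact ⟨h₁.trans h₂.symm, h₂.trans h₃.symm⟩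
end
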